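/- arXiv:2002.07919 — 16 statements merged into one kernel-verified Lean document; each statement's English description precedes it below -/
import Mathlib

section
/- Let Z be a nonempty closed convex subset of a real Hilbert space H. For every z ∈ Z, every ζ ∈ H and every L > 0, the proximal-gradient measure is dominated by the strong stationarity measure: W_Z(z, ζ, L) ≤ S_Z(z, ζ, L). -/
open RealInnerProductSpace

/-- The strong stationarity measure `S_Z(z, ζ, L)`:
the nonnegative real with
`S_Z(z, ζ, L)^2 = 2L · sup_{z' ∈ Z} [ −⟨ζ, z' − z⟩ − (L/2)‖z' − z‖² ]`. -/
noncomputable def Smeas {H : Type*} [NormedAddCommGroup H] [InnerProductSpace ℝ H]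
    (Z : Set H) (z ζ : H) (L : ℝ) : ℝ :=
  Real.sqrt (2 * L * sSup ((fun z' : H => -⟪ζ, z' - z⟫ - L / 2 * ‖z' - z‖ ^ 2) '' Z))

/-- for `Z` nonempty closed convex in a real Hilbert space, the
proximal-gradient measure `W_Z(z, ζ, L) = L‖z − Π_Z(z − ζ/L)‖` is dominated by the
strong stationarity measure `S_Z(z, ζ, L)`.  Here `proj` is the metric projection
onto `Z`, characterized by its variational inequality. -/
theorem stmt_0 {H : Type*} [NormedAddCommGroup H] [InnerProductSpace ℝ H] [CompleteSpace H]
    (Z : Set H) (hne : Z.Nonempty) (hcl : IsClosed Z) (hconv : Convex ℝ Z)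
    (proj : H → H)
    (hproj : ∀ u : H, proj u ∈ Z ∧ ∀ w ∈ Z, ⟪u - proj u, w - proj u⟫ ≤ 0)
    (z : H) (hz : z ∈ Z) (ζ : H) (L : ℝ) (hL : 0 < L) :
    L * ‖z - proj (z - (1 / L) • ζ)‖ ≤ Smeas Z z ζ L := by
  set p := proj (z - (1 / L) • ζ) with hp
  obtain ⟨hpZ, hvar⟩ := hproj (z - (1 / L) • ζ)
  have hkey : L * ‖z - p‖ ^ 2 ≤ ⟪ζ, z - p⟫ := by
    have h := hvar z hz
    rw [show z - (1 / L) • ζ - p = (z - p) - (1 / L) • ζ by abel] at h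
    rw [inner_sub_left, real_inner_smul_left, real_inner_self_eq_norm_sq, ← hp] at h
    have hL' : L ≠ 0 := ne_of_gt hL
    field_simp at h
    nlinarith [h]
  have hbdd : BddAbove ((fun z' : H => -⟪ζ, z' - z⟫ - L / 2 * ‖z' - z‖ ^ 2) '' Z) := by
    refine ⟨‖ζ‖ ^ 2 / (2 * L), ?_⟩
    rintro _ ⟨w, hw, rfl⟩
    have h1 : -⟪ζ, w - z⟫ ≤ ‖ζ‖ * ‖w - z‖ :=
      (neg_le_abs _).trans (abs_real_inner_le_norm _ _)
    have h2 : (0:ℝ) ≤ (‖ζ‖ - L * ‖w - z‖) ^ 2 := sq_nonneg _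
    simp only
    rw [le_div_iff₀ (by positivity : (0:ℝ) < 2 * L)]
    nlinarith [h1, h2, hL]
  have hmem : (-⟪ζ, p - z⟫ - L / 2 * ‖p - z‖ ^ 2) ∈
      ((fun z' : H => -⟪ζ, z' - z⟫ - L / 2 * ‖z' - z‖ ^ 2) '' Z) := ⟨p, hpZ, rfl⟩
  have hle := le_csSup hbdd hmem
  have hflip : -⟪ζ, p - z⟫ = ⟪ζ, z - p⟫ := by
    rw [show p - z = -(z - p) by abel, inner_neg_right]; ring
  have hnorm : ‖p - z‖ = ‖z - p‖ := by rw [norm_sub_rev]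
  have hsup : L / 2 * ‖z - p‖ ^ 2 ≤
      sSup ((fun z' : H => -⟪ζ, z' - z⟫ - L / 2 * ‖z' - z‖ ^ 2) '' Z) := by
    rw [hflip, hnorm] at hle
    nlinarith [hle, hkey]
  have hsq : (L * ‖z - p‖) ^ 2 ≤
      2 * L * sSup ((fun z' : H => -⟪ζ, z' - z⟫ - L / 2 * ‖z' - z‖ ^ 2) '' Z) := by
    nlinarith [hsup, hL]
  calc L * ‖z - p‖ = Real.sqrt ((L * ‖z - p‖) ^ 2) :=
        (Real.sqrt_sq (by positivity)).symm
    _ ≤ Smeas Z z ζ L := Real.sqrt_le_sqrt hsq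
end

section
/- Let Z be a nonempty convex subset of a real inner product space H, let z ∈ Z and ζ ∈ H. Then the stationarity measure is nondecreasing in its last argument: for all 0 < L₁ ≤ L₂ one has S_Z(z, ζ, L₁) ≤ S_Z(z, ζ, L₂). -/
open RealInnerProductSpace

/-- the stationarity measure is nondecreasing in its last argument:
for `0 < L₁ ≤ L₂` one has `S_Z(z, ζ, L₁) ≤ S_Z(z, ζ, L₂)`. -/
theorem stmt_1 {H : Type*} [NormedAddCommGroup H] [InnerProductSpace ℝ H]
    (Z : Set H) (hne : Z.Nonempty) (hconv : Convex ℝ Z)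
    (z : H) (hz : z ∈ Z) (ζ : H)
    (L₁ L₂ : ℝ) (hL₁ : 0 < L₁) (hL : L₁ ≤ L₂) :
    Smeas Z z ζ L₁ ≤ Smeas Z z ζ L₂ := by
  have hL₂ : 0 < L₂ := hL₁.trans_le hL
  set f : ℝ → H → ℝ := fun L z' => -⟪ζ, z' - z⟫ - L / 2 * ‖z' - z‖ ^ 2 with hf
  -- boundedness above of the image for L₂
  have bdd : BddAbove (f L₂ '' Z) := by
    refine ⟨‖ζ‖ ^ 2 / (2 * L₂), ?_⟩
    rintro y ⟨z', hz', rfl⟩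
    have h1 : -⟪ζ, z' - z⟫ ≤ ‖ζ‖ * ‖z' - z‖ := by
      have := abs_real_inner_le_norm ζ (z' - z)
      cases abs_cases (⟪ζ, z' - z⟫ : ℝ) with
      | inl h => linarith [h.1 ▸ this]
      | inr h => linarith [h.1 ▸ this]
    have hn : (0:ℝ) ≤ ‖z' - z‖ := norm_nonneg _
    simp only [hf]
    rw [le_div_iff₀ (by positivity : (0:ℝ) < 2 * L₂)]
    nlinarith [sq_nonneg (‖ζ‖ - L₂ * ‖z' - z‖)]
  have hzmem : f L₂ z ∈ f L₂ '' Z := ⟨z, hz, rfl⟩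
  have hS₂nonneg : 0 ≤ sSup (f L₂ '' Z) := by
    have := le_csSup bdd hzmem
    simpa [hf] using this
  -- key inequality
  have key : sSup (f L₁ '' Z) ≤ (L₂ / L₁) * sSup (f L₂ '' Z) := by
    apply csSup_le (hne.image _)
    rintro y ⟨z', hz', rfl⟩
    set lam : ℝ := L₁ / L₂ with hlam
    have hlam0 : 0 ≤ lam := by positivity
    have hlam1 : lam ≤ 1 := div_le_one_of_le₀ hL hL₂.le
    set z'' : H := z + lam • (z' - z) with hz''
    have hmem : z'' ∈ Z := by
      have := hconv hz hz' (by linarith : (0:ℝ) ≤ 1 - lam) hlam0 (by ring)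
      have heq : (1 - lam) • z + lam • z' = z'' := by
        rw [hz'', smul_sub, sub_smul, one_smul]; abel
      rwa [heq] at this
    have hval : f L₁ z' = (L₂ / L₁) * f L₂ z'' := by
      simp only [hf, hz'', add_sub_cancel_left, inner_smul_right, norm_smul,
        Real.norm_eq_abs, abs_of_nonneg hlam0, mul_pow, hlam]
      field_simp
      rw [sq_abs]; field_simp
    calc f L₁ z' = (L₂ / L₁) * f L₂ z'' := hval
      _ ≤ (L₂ / L₁) * sSup (f L₂ '' Z) := by
          apply mul_le_mul_of_nonneg_left (le_csSup bdd ⟨z'', hmem, rfl⟩)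
          positivity
  apply Real.sqrt_le_sqrt
  have h2 : 2 * L₁ * sSup (f L₁ '' Z) ≤ 2 * L₁ * ((L₂ / L₁) * sSup (f L₂ '' Z)) :=
    mul_le_mul_of_nonneg_left key (by positivity)
  have h3 : 2 * L₁ * ((L₂ / L₁) * sSup (f L₂ '' Z)) = 2 * L₂ * sSup (f L₂ '' Z) := by
    field_simp
  calc 2 * L₁ * sSup ((fun z' : H => -⟪ζ, z' - z⟫ - L₁ / 2 * ‖z' - z‖ ^ 2) '' Z)
      = 2 * L₁ * sSup (f L₁ '' Z) := rfl
    _ ≤ 2 * L₂ * sSup (f L₂ '' Z) := h3 ▸ h2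
    _ = 2 * L₂ * sSup ((fun z' : H => -⟪ζ, z' - z⟫ - L₂ / 2 * ‖z' - z‖ ^ 2) '' Z) := rfl
end

section
/- Let Z be a nonempty convex subset of a real inner product space H, let L > 0, and let f : Z → ℝ be differentiable with gradient ∇f and satisfy the descent inequality f(z') − f(z) ≤ ⟨∇f(z), z' − z⟩ + (L/2)‖z' − z‖^2 for all z, z' ∈ Z. If z* ∈ Z is a minimizer of f on Z, then for every z ∈ Z one has S_Z(z, ∇f(z), L)^2 ≤ 2L (f(z) − f(z*)). -/
open RealInnerProductSpace

/-- if `f` is differentiable with gradient `g` satisfying the descent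
inequality with modulus `L` on the convex set `Z`, and `z*` minimizes `f` on `Z`,
then `S_Z(z, ∇f(z), L)² ≤ 2L (f(z) − f(z*))` for every `z ∈ Z`. -/
theorem stmt_2 {H : Type*} [NormedAddCommGroup H] [InnerProductSpace ℝ H]
    (Z : Set H) (hne : Z.Nonempty) (hconv : Convex ℝ Z)
    (L : ℝ) (hL : 0 < L)
    (f : H → ℝ) (g : H → H)
    (hdesc : ∀ z ∈ Z, ∀ z' ∈ Z, f z' - f z ≤ ⟪g z, z' - z⟫ + L / 2 * ‖z' - z‖ ^ 2)
    (zstar : H) (hzstar : zstar ∈ Z) (hmin : ∀ z ∈ Z, f zstar ≤ f z)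
    (z : H) (hz : z ∈ Z) :
    (Smeas Z z (g z) L) ^ 2 ≤ 2 * L * (f z - f zstar) := by
  set φ : H → ℝ := fun z' => -⟪g z, z' - z⟫ - L / 2 * ‖z' - z‖ ^ 2 with hφ
  have hub : ∀ y ∈ φ '' Z, y ≤ f z - f zstar := by
    rintro y ⟨z', hz', rfl⟩
    have h1 := hdesc z hz z' hz'
    have h2 := hmin z' hz'
    simp only [hφ]
    linarith
  have hbdd : BddAbove (φ '' Z) := ⟨f z - f zstar, hub⟩
  have hmem : (0 : ℝ) ∈ φ '' Z := ⟨z, hz, by simp [hφ]⟩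
  have h0 : 0 ≤ sSup (φ '' Z) := le_csSup hbdd hmem
  have hle : sSup (φ '' Z) ≤ f z - f zstar :=
    csSup_le ⟨0, hmem⟩ hub
  have hnn : 0 ≤ 2 * L * sSup (φ '' Z) := by positivity
  rw [Smeas, Real.sq_sqrt hnn]
  have : (2 : ℝ) * L ≥ 0 := by positivity
  nlinarith
end

section
/- Let X be a nonempty convex subset of a real inner product space H, let x, x⁺ ∈ X, g ∈ H, and let L > 0 and c > 0. Suppose the first-order optimality condition of the proximal step holds: ⟨g + (L/c)(x⁺ − x), x' − x⁺⟩ ≥ 0 for all x' ∈ X. Then S_X(x⁺, g, L) ≤ (L/c)‖x⁺ − x‖. -/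
open RealInnerProductSpace

/-- if `x⁺ ∈ X` satisfies the first-order optimality condition of the
proximal step, `⟨g + (L/c)(x⁺ − x), x' − x⁺⟩ ≥ 0` for all `x' ∈ X`, then
`S_X(x⁺, g, L) ≤ (L/c)‖x⁺ − x‖`. -/
theorem stmt_3 {H : Type*} [NormedAddCommGroup H] [InnerProductSpace ℝ H]
    (X : Set H) (hne : X.Nonempty) (hconv : Convex ℝ X)
    (x xplus : H) (hx : x ∈ X) (hxplus : xplus ∈ X) (g : H)
    (L c : ℝ) (hL : 0 < L) (hc : 0 < c)
    (hopt : ∀ x' ∈ X, 0 ≤ ⟪g + (L / c) • (xplus - x), x' - xplus⟫) :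
    Smeas X xplus g L ≤ L / c * ‖xplus - x‖ := by
  set v : H := (L / c) • (xplus - x) with hv
  have hbound : ∀ y ∈ (fun z' : H => -⟪g, z' - xplus⟫ - L / 2 * ‖z' - xplus‖ ^ 2) '' X,
      y ≤ ‖v‖ ^ 2 / (2 * L) := by
    rintro y ⟨z', hz', rfl⟩
    have h1 := hopt z' hz'
    rw [inner_add_left] at h1
    have h2 : -⟪g, z' - xplus⟫ ≤ ⟪v, z' - xplus⟫ := by linarith
    have h3 : ⟪v, z' - xplus⟫ ≤ ‖v‖ * ‖z' - xplus‖ := real_inner_le_norm _ _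
    have h4 : 0 ≤ (‖v‖ - L * ‖z' - xplus‖) ^ 2 := sq_nonneg _
    have hL' : (0:ℝ) < 2 * L := by linarith
    show -⟪g, z' - xplus⟫ - L / 2 * ‖z' - xplus‖ ^ 2 ≤ ‖v‖ ^ 2 / (2 * L)
    rw [le_div_iff₀ hL']
    nlinarith [sq_nonneg (‖v‖ - L * ‖z' - xplus‖)]
  have hsup : sSup ((fun z' : H => -⟪g, z' - xplus⟫ - L / 2 * ‖z' - xplus‖ ^ 2) '' X)
      ≤ ‖v‖ ^ 2 / (2 * L) :=
    csSup_le (hne.image _) hbound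
  have h2L : (0:ℝ) < 2 * L := by linarith
  have key : 2 * L * sSup ((fun z' : H => -⟪g, z' - xplus⟫ - L / 2 * ‖z' - xplus‖ ^ 2) '' X)
      ≤ ‖v‖ ^ 2 := by
    calc 2 * L * _ ≤ 2 * L * (‖v‖ ^ 2 / (2 * L)) := by
          exact mul_le_mul_of_nonneg_left hsup (le_of_lt h2L)
      _ = ‖v‖ ^ 2 := by field_simp
  have : Smeas X xplus g L ≤ Real.sqrt (‖v‖ ^ 2) := Real.sqrt_le_sqrt key
  rw [Real.sqrt_sq (norm_nonneg _)] at this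
  refine this.trans_eq ?_
  rw [hv, norm_smul, Real.norm_eq_abs, abs_of_pos (div_pos hL hc)]
end

section
/- Let X be a nonempty convex subset of a real inner product space H, let φ : X → ℝ be differentiable with gradient ∇φ and bounded below on X, let L > 0, c ∈ (0, 1], T a positive integer, and Δ ≥ φ(x₀) − inf_{x ∈ X} φ(x). Let x₀, x₁, …, x_T ∈ X be such that for each t ∈ {1, …, T}: (i) φ(x_t) + (L/(2c))‖x_t − x_{t−1}‖^2 ≤ φ(x') + (L/(2c))‖x' − x_{t−1}‖^2 for all x' ∈ X, and (ii) ⟨∇φ(x_t) + (L/c)(x_t − x_{t−1}), x' − x_t⟩ ≥ 0 for all x' ∈ X. Then min_{t ∈ {1,…,T}} S_X(x_t, ∇φ(x_t), L)^2 ≤ 2LΔ/(cT). -/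
open RealInnerProductSpace

/-- for exact proximal-point iterations `x_t = argmin_{x' ∈ X}
[φ(x') + (L/(2c))‖x' − x_{t−1}‖²]` (stated via the minimization property (i) and
first-order optimality condition (ii)), at least one iterate `t ∈ {1,…,T}` satisfies
`S_X(x_t, ∇φ(x_t), L)² ≤ 2LΔ/(cT)`. -/
theorem stmt_4 {H : Type*} [NormedAddCommGroup H] [InnerProductSpace ℝ H]
    (X : Set H) (hne : X.Nonempty) (hconv : Convex ℝ X)
    (φ : H → ℝ) (g : H → H) (hbdd : BddBelow (φ '' X))
    (L c : ℝ) (hL : 0 < L) (hc0 : 0 < c) (hc1 : c ≤ 1)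
    (T : ℕ) (hT : 0 < T) (Δ : ℝ)
    (x : ℕ → H) (hmem : ∀ t ≤ T, x t ∈ X)
    (hΔ : φ (x 0) - sInf (φ '' X) ≤ Δ)
    (hi : ∀ t ∈ Finset.Icc 1 T, ∀ x' ∈ X,
      φ (x t) + L / (2 * c) * ‖x t - x (t - 1)‖ ^ 2 ≤
        φ x' + L / (2 * c) * ‖x' - x (t - 1)‖ ^ 2)
    (hii : ∀ t ∈ Finset.Icc 1 T, ∀ x' ∈ X,
      0 ≤ ⟪g (x t) + (L / c) • (x t - x (t - 1)), x' - x t⟫) :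
    ∃ t ∈ Finset.Icc 1 T, (Smeas X (x t) (g (x t)) L) ^ 2 ≤ 2 * L * Δ / (c * T) := by
  have key : ∀ t ∈ Finset.Icc 1 T,
      (Smeas X (x t) (g (x t)) L) ^ 2 ≤ 2 * L / c * (φ (x (t-1)) - φ (x t)) := by
    intro t ht
    obtain ⟨ht1, htT⟩ := Finset.mem_Icc.mp ht
    have hxt : x t ∈ X := hmem t htT
    have hxt1 : x (t - 1) ∈ X := hmem (t - 1) (le_trans (Nat.sub_le t 1) htT)
    have hdsq : L * ‖x t - x (t-1)‖ ^ 2 ≤ 2 * c * (φ (x (t-1)) - φ (x t)) := by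
      have h := hi t ht (x (t-1)) hxt1
      rw [sub_self, norm_zero] at h
      norm_num at h
      have h2c : (0:ℝ) < 2 * c := by positivity
      have h' : L / (2 * c) * ‖x t - x (t-1)‖ ^ 2 ≤ φ (x (t-1)) - φ (x t) := by linarith
      have h2 := mul_le_mul_of_nonneg_left h' h2c.le
      calc L * ‖x t - x (t-1)‖ ^ 2 = 2 * c * (L / (2 * c) * ‖x t - x (t-1)‖ ^ 2) := by
            field_simp
        _ ≤ 2 * c * (φ (x (t-1)) - φ (x t)) := h2
    set S := ((fun z' : H => -⟪g (x t), z' - x t⟫ - L / 2 * ‖z' - x t‖ ^ 2) '' X) with hS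
    have hub : ∀ y ∈ S, y ≤ L / (2 * c ^ 2) * ‖x t - x (t-1)‖ ^ 2 := by
      rintro y ⟨x', hx', rfl⟩
      have h2 := hii t ht x' hx'
      rw [inner_add_left, real_inner_smul_left] at h2
      have hcs : ⟪x t - x (t-1), x' - x t⟫ ≤ ‖x t - x (t-1)‖ * ‖x' - x t‖ :=
        real_inner_le_norm _ _
      have hLc : (0:ℝ) ≤ L / c := by positivity
      have h3 : -⟪g (x t), x' - x t⟫ ≤ L / c * (‖x t - x (t-1)‖ * ‖x' - x t‖) := by
        have := mul_le_mul_of_nonneg_left hcs hLc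
        linarith
      have h4 : L / c * (‖x t - x (t-1)‖ * ‖x' - x t‖) - L / 2 * ‖x' - x t‖ ^ 2 ≤
          L / (2 * c ^ 2) * ‖x t - x (t-1)‖ ^ 2 := by
        rw [div_mul_eq_mul_div, div_mul_eq_mul_div, div_mul_eq_mul_div, div_sub_div _ _ (ne_of_gt hc0) (two_ne_zero), div_le_div_iff₀ (by positivity) (by positivity)]
        nlinarith [mul_nonneg hL.le (sq_nonneg (c * ‖x' - x t‖ - ‖x t - x (t-1)‖)), hc0, sq_nonneg c]
      simp only
      linarith
    have h0 : (0:ℝ) ∈ S := by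
      refine ⟨x t, hxt, ?_⟩
      simp
    have hBdd : BddAbove S := ⟨_, hub⟩
    have hsup0 : 0 ≤ sSup S := le_csSup hBdd h0
    have hsupB : sSup S ≤ L / (2 * c ^ 2) * ‖x t - x (t-1)‖ ^ 2 :=
      Real.sSup_le hub (by positivity)
    have hsq : (Smeas X (x t) (g (x t)) L) ^ 2 = 2 * L * sSup S := by
      rw [Smeas, Real.sq_sqrt (by positivity)]
    rw [hsq]
    have hmain : 2 * L * (L / (2 * c ^ 2) * ‖x t - x (t-1)‖ ^ 2) ≤
        2 * L / c * (φ (x (t-1)) - φ (x t)) := by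
      have h1 := mul_le_mul_of_nonneg_left hdsq (by positivity : (0:ℝ) ≤ L / c ^ 2)
      calc 2 * L * (L / (2 * c ^ 2) * ‖x t - x (t-1)‖ ^ 2)
            = L / c ^ 2 * (L * ‖x t - x (t-1)‖ ^ 2) := by ring
        _ ≤ L / c ^ 2 * (2 * c * (φ (x (t-1)) - φ (x t))) := h1
        _ = 2 * L / c * (φ (x (t-1)) - φ (x t)) := by
            field_simp
    have hstep : 2 * L * sSup S ≤ 2 * L * (L / (2 * c ^ 2) * ‖x t - x (t-1)‖ ^ 2) := by
      have := mul_le_mul_of_nonneg_left hsupB (by positivity : (0:ℝ) ≤ 2 * L)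
      linarith
    linarith
  -- telescoping / averaging
  have hsum : ∑ i ∈ Finset.range T, (φ (x i) - φ (x (i+1))) ≤
      ∑ i ∈ Finset.range T, (Δ / T) := by
    rw [Finset.sum_range_sub' (fun i => φ (x i)), Finset.sum_const, Finset.card_range,
      nsmul_eq_mul, mul_div_cancel₀ _ (by exact_mod_cast hT.ne' : (T:ℝ) ≠ 0)]
    have hinf : sInf (φ '' X) ≤ φ (x T) := csInf_le hbdd ⟨x T, hmem T le_rfl, rfl⟩
    linarith
  obtain ⟨i, hi', hile⟩ := Finset.exists_le_of_sum_le ⟨0, Finset.mem_range.mpr hT⟩ hsum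
  refine ⟨i + 1, Finset.mem_Icc.mpr ⟨Nat.le_add_left 1 i, Finset.mem_range.mp hi'⟩, ?_⟩
  have hk := key (i + 1) (Finset.mem_Icc.mpr ⟨Nat.le_add_left 1 i, Finset.mem_range.mp hi'⟩)
  simp only [Nat.add_sub_cancel] at hk
  have h2 : 2 * L / c * (φ (x i) - φ (x (i+1))) ≤ 2 * L / c * (Δ / T) :=
    mul_le_mul_of_nonneg_left hile (by positivity)
  have h3 : 2 * L / c * (Δ / (T:ℝ)) = 2 * L * Δ / (c * T) := by
    field_simp
  linarith
end

section
/- Let X be a nonempty convex subset of a real inner product space H, let x, x̃⁺ ∈ X, g ∈ H, L > 0 and ε > 0. If S_X(x̃⁺, g + 2L(x̃⁺ − x), L) ≤ ε/2, then S_X(x̃⁺, g, L)^2 ≤ ε²/2 + 8L²‖x̃⁺ − x‖². -/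
open RealInnerProductSpace

/-- if the stationarity measure of the regularized gradient
`g + 2L(x̃⁺ − x)` at `x̃⁺` is at most `ε/2`, then
`S_X(x̃⁺, g, L)² ≤ ε²/2 + 8L²‖x̃⁺ − x‖²`. -/
theorem stmt_6 {H : Type*} [NormedAddCommGroup H] [InnerProductSpace ℝ H]
    (X : Set H) (hne : X.Nonempty) (hconv : Convex ℝ X)
    (x xtplus : H) (hx : x ∈ X) (hxt : xtplus ∈ X) (g : H)
    (L ε : ℝ) (hL : 0 < L) (hε : 0 < ε)
    (hstat : Smeas X xtplus (g + (2 * L) • (xtplus - x)) L ≤ ε / 2) :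
    (Smeas X xtplus g L) ^ 2 ≤ ε ^ 2 / 2 + 8 * L ^ 2 * ‖xtplus - x‖ ^ 2 := by
  set u := xtplus - x with hu
  set ζ := g + (2 * L) • u with hζ
  -- general facts about the sup
  have hbdd : ∀ w : H, BddAbove ((fun z' : H => -⟪w, z' - xtplus⟫ - L / 2 * ‖z' - xtplus‖ ^ 2) '' X) := by
    intro w
    refine ⟨‖w‖ ^ 2 / (2 * L), ?_⟩
    rintro y ⟨z', hz', rfl⟩
    have h1 : -⟪w, z' - xtplus⟫ ≤ ‖w‖ * ‖z' - xtplus‖ :=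
      (neg_le_abs _).trans (abs_real_inner_le_norm _ _)
    have h2 : (0:ℝ) ≤ ‖z' - xtplus‖ := norm_nonneg _
    have h3 : (0:ℝ) ≤ (‖w‖ - L * ‖z' - xtplus‖)^2 := sq_nonneg _
    have hL' := hL.le
    show -⟪w, z' - xtplus⟫ - L / 2 * ‖z' - xtplus‖ ^ 2 ≤ ‖w‖ ^ 2 / (2 * L)
    rw [le_div_iff₀ (by positivity)]
    nlinarith
  have hnemp : ∀ w : H, ((fun z' : H => -⟪w, z' - xtplus⟫ - L / 2 * ‖z' - xtplus‖ ^ 2) '' X).Nonempty :=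
    fun w => hne.image _
  have hmem0 : ∀ w : H, (0:ℝ) ∈ ((fun z' : H => -⟪w, z' - xtplus⟫ - L / 2 * ‖z' - xtplus‖ ^ 2) '' X) := by
    intro w
    exact ⟨xtplus, hxt, by simp⟩
  have hsup_nonneg : ∀ w : H, 0 ≤ sSup ((fun z' : H => -⟪w, z' - xtplus⟫ - L / 2 * ‖z' - xtplus‖ ^ 2) '' X) :=
    fun w => le_csSup (hbdd w) (hmem0 w)
  set A := ((fun z' : H => -⟪g, z' - xtplus⟫ - L / 2 * ‖z' - xtplus‖ ^ 2) '' X)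
  set B := ((fun z' : H => -⟪ζ, z' - xtplus⟫ - L / 2 * ‖z' - xtplus‖ ^ 2) '' X)
  have hsqA : (Smeas X xtplus g L) ^ 2 = 2 * L * sSup A :=
    Real.sq_sqrt (mul_nonneg (by positivity) (hsup_nonneg g))
  have hsqB : (Smeas X xtplus ζ L) ^ 2 = 2 * L * sSup B :=
    Real.sq_sqrt (mul_nonneg (by positivity) (hsup_nonneg ζ))
  -- key pointwise bound
  have hkey : sSup A ≤ 2 * sSup B + 4 * L * ‖u‖ ^ 2 := by
    apply csSup_le (hnemp g)
    rintro y ⟨z', hz', rfl⟩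
    set d := z' - xtplus with hd
    set m := (1/2 : ℝ) • xtplus + (1/2 : ℝ) • z' with hm
    have hmX : m ∈ X := hconv hxt hz' (by norm_num) (by norm_num) (by norm_num)
    have hmd : m - xtplus = (1/2 : ℝ) • d := by
      rw [hm, hd]
      module
    have hfm : -⟪ζ, m - xtplus⟫ - L / 2 * ‖m - xtplus‖ ^ 2
        = -(1/2) * ⟪ζ, d⟫ - L / 8 * ‖d‖ ^ 2 := by
      rw [hmd, real_inner_smul_right, norm_smul]
      simp [mul_pow]
      ring
    have hfmB : -⟪ζ, m - xtplus⟫ - L / 2 * ‖m - xtplus‖ ^ 2 ≤ sSup B :=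
      le_csSup (hbdd ζ) ⟨m, hmX, rfl⟩
    have hexp : ⟪ζ, d⟫ = ⟪g, d⟫ + 2 * L * ⟪u, d⟫ := by
      rw [hζ, inner_add_left, real_inner_smul_left]
    have hsq : (0:ℝ) ≤ ‖(1/2 : ℝ) • d - (2:ℝ) • u‖ ^ 2 := sq_nonneg _
    have hexp2 : ‖(1/2 : ℝ) • d - (2:ℝ) • u‖ ^ 2
        = (1/4) * ‖d‖ ^ 2 - 2 * ⟪u, d⟫ + 4 * ‖u‖ ^ 2 := by
      rw [norm_sub_sq_real, real_inner_smul_left, real_inner_smul_right, norm_smul, norm_smul,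
        real_inner_comm]
      simp [mul_pow]
      ring
    rw [hexp2] at hsq
    have : -⟪g, d⟫ - L / 2 * ‖d‖ ^ 2
        ≤ 2 * (-⟪ζ, m - xtplus⟫ - L / 2 * ‖m - xtplus‖ ^ 2) + 4 * L * ‖u‖ ^ 2 := by
      rw [hfm, hexp]
      nlinarith [hL.le]
    linarith [mul_le_mul_of_nonneg_left hfmB (by norm_num : (0:ℝ) ≤ 2)]
  -- conclude
  have hBsq : 2 * L * sSup B ≤ (ε / 2) ^ 2 := by
    have h0 : 0 ≤ Smeas X xtplus ζ L := Real.sqrt_nonneg _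
    nlinarith [hsqB, hstat]
  rw [hsqA]
  nlinarith [hsup_nonneg ζ, hL]
end

section
/- Let X be a nonempty convex subset of a real inner product space H, let φ : X → ℝ be differentiable with gradient ∇φ and bounded below on X, let L > 0, ε > 0, T a positive integer, and Δ ≥ φ(x̃₀) − inf_{x ∈ X} φ(x). Let x̃₀, x̃₁, …, x̃_T ∈ X satisfy, for each t ∈ {1, …, T}: (i) φ(x̃_t) + L‖x̃_t − x̃_{t−1}‖^2 ≤ inf_{x' ∈ X} [ φ(x') + L‖x' − x̃_{t−1}‖^2 ] + ε²/(24L), and (ii) S_X(x̃_t, ∇φ(x̃_t) + 2L(x̃_t − x̃_{t−1}), L) ≤ ε/2. Then min_{t ∈ {1,…,T}} S_X(x̃_t, ∇φ(x̃_t), L) ≤ 3√(LΔ/T) + ε. -/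
open RealInnerProductSpace

section Aux
variable {H : Type*} [NormedAddCommGroup H] [InnerProductSpace ℝ H]

private lemma real_key_7 (b δ P r : ℝ) (hb0 : 0 ≤ b) (hδ0 : 0 ≤ δ) (hr0 : 0 ≤ r)
    (hs : ∀ s : ℝ, 0 ≤ s → s ≤ 1 → 2 * s * P - s ^ 2 * r ^ 2 ≤ b ^ 2) :
    2 * P + 2 * δ * r - r ^ 2 ≤ (b + δ) ^ 2 := by
  have hs1 := hs 1 (by norm_num) le_rfl
  rcases le_or_gt P 0 with hP | hP
  · nlinarith [sq_nonneg (δ - r), mul_nonneg hb0 hδ0, sq_nonneg b]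
  · rcases le_or_gt P (r ^ 2) with h2 | h2
    · have hr : 0 < r := by nlinarith
      have hsP := hs (P / r ^ 2) (by positivity)
        (by rw [div_le_one (by positivity)]; exact h2)
      have heq : 2 * (P / r ^ 2) * P - (P / r ^ 2) ^ 2 * r ^ 2 = P ^ 2 / r ^ 2 := by
        field_simp; ring
      rw [heq] at hsP
      have hP2 : P ^ 2 ≤ b ^ 2 * r ^ 2 := by
        rw [div_le_iff₀ (by positivity)] at hsP; linarith
      have hPbr : P ≤ b * r := by nlinarith [mul_nonneg hb0 hr.le]
      nlinarith [sq_nonneg (b + δ - r), mul_nonneg hδ0 hr0]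
    · have hrb : r ≤ b := by nlinarith
      nlinarith [mul_le_mul_of_nonneg_left hrb hδ0]

private lemma bddAbove_aux_7 (Z : Set H) (z ζ : H) (L : ℝ) (hL : 0 < L) :
    BddAbove ((fun z' : H => -⟪ζ, z' - z⟫ - L / 2 * ‖z' - z‖ ^ 2) '' Z) := by
  refine ⟨‖ζ‖ ^ 2 / (2 * L), ?_⟩
  rintro y ⟨z', hz', rfl⟩
  have h1 : -⟪ζ, z' - z⟫ ≤ ‖ζ‖ * ‖z' - z‖ := by
    have h2 := abs_real_inner_le_norm ζ (z' - z)
    have h3 := neg_abs_le (⟪ζ, z' - z⟫ : ℝ)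
    linarith
  rw [le_div_iff₀ (by positivity)]
  nlinarith [sq_nonneg (‖ζ‖ - L * ‖z' - z‖), norm_nonneg (z' - z)]

private lemma sSup_nonneg_aux_7 (Z : Set H) (z : H) (hz : z ∈ Z) (ζ : H) (L : ℝ) (hL : 0 < L) :
    0 ≤ sSup ((fun z' : H => -⟪ζ, z' - z⟫ - L / 2 * ‖z' - z‖ ^ 2) '' Z) := by
  have h0 : (0:ℝ) ∈ ((fun z' : H => -⟪ζ, z' - z⟫ - L / 2 * ‖z' - z‖ ^ 2) '' Z) :=
    ⟨z, hz, by simp⟩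
  exact le_csSup (bddAbove_aux_7 Z z ζ L hL) h0

private lemma Smeas_perturb_7 (Z : Set H) (hconv : Convex ℝ Z) (z : H) (hz : z ∈ Z)
    (ζ ζ' : H) (L : ℝ) (hL : 0 < L) :
    Smeas Z z ζ L ≤ Smeas Z z ζ' L + ‖ζ - ζ'‖ := by
  have hb0 : 0 ≤ Smeas Z z ζ' L := Real.sqrt_nonneg _
  have hδ0 : (0:ℝ) ≤ ‖ζ - ζ'‖ := norm_nonneg _
  have hA' : 0 ≤ sSup ((fun z' : H => -⟪ζ', z' - z⟫ - L / 2 * ‖z' - z‖ ^ 2) '' Z) :=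
    sSup_nonneg_aux_7 Z z hz ζ' L hL
  have hb2 : (Smeas Z z ζ' L) ^ 2
      = 2 * L * sSup ((fun z' : H => -⟪ζ', z' - z⟫ - L / 2 * ‖z' - z‖ ^ 2) '' Z) := by
    rw [Smeas, Real.sq_sqrt (by positivity)]
  have key : sSup ((fun z' : H => -⟪ζ, z' - z⟫ - L / 2 * ‖z' - z‖ ^ 2) '' Z)
      ≤ (Smeas Z z ζ' L + ‖ζ - ζ'‖) ^ 2 / (2 * L) := by
    apply Real.sSup_le _ (by positivity)
    rintro y ⟨z', hz', rfl⟩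
    rw [le_div_iff₀ (by positivity)]
    have hs : ∀ s : ℝ, 0 ≤ s → s ≤ 1 →
        2 * s * (-(L * ⟪ζ', z' - z⟫)) - s ^ 2 * (L * ‖z' - z‖) ^ 2
          ≤ (Smeas Z z ζ' L) ^ 2 := by
      intro s hs0 hs1
      have hmemZ : z + s • (z' - z) ∈ Z := by
        have h := hconv hz hz' (a := 1 - s) (b := s) (by linarith) hs0 (by ring)
        convert h using 1
        module
      have hle : -⟪ζ', (z + s • (z' - z)) - z⟫ - L / 2 * ‖(z + s • (z' - z)) - z‖ ^ 2
          ≤ sSup ((fun z' : H => -⟪ζ', z' - z⟫ - L / 2 * ‖z' - z‖ ^ 2) '' Z) :=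
        le_csSup (bddAbove_aux_7 Z z ζ' L hL) ⟨z + s • (z' - z), hmemZ, rfl⟩
      have h1 : (z + s • (z' - z)) - z = s • (z' - z) := by abel
      rw [h1, real_inner_smul_right, norm_smul, Real.norm_eq_abs, abs_of_nonneg hs0,
        mul_pow] at hle
      rw [hb2]
      nlinarith [hle]
    have hrk := real_key_7 (Smeas Z z ζ' L) (‖ζ - ζ'‖) (-(L * ⟪ζ', z' - z⟫)) (L * ‖z' - z‖)
      hb0 hδ0 (by positivity) hs
    have hcs : -⟪ζ, z' - z⟫ ≤ -⟪ζ', z' - z⟫ + ‖ζ - ζ'‖ * ‖z' - z‖ := by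
      have h1 : (⟪ζ, z' - z⟫ : ℝ) = ⟪ζ', z' - z⟫ + ⟪ζ - ζ', z' - z⟫ := by
        rw [← inner_add_left]; congr 1; abel
      have h2 := abs_real_inner_le_norm (ζ - ζ') (z' - z)
      have h3 := neg_abs_le (⟪ζ - ζ', z' - z⟫ : ℝ)
      rw [h1]; linarith
    nlinarith [mul_le_mul_of_nonneg_right hcs (le_of_lt (by linarith : (0:ℝ) < 2 * L))]
  have hfin : Smeas Z z ζ L ≤ Real.sqrt ((Smeas Z z ζ' L + ‖ζ - ζ'‖) ^ 2) := by
    rw [Smeas]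
    apply Real.sqrt_le_sqrt
    calc 2 * L * sSup ((fun z' : H => -⟪ζ, z' - z⟫ - L / 2 * ‖z' - z‖ ^ 2) '' Z)
        ≤ 2 * L * ((Smeas Z z ζ' L + ‖ζ - ζ'‖) ^ 2 / (2 * L)) :=
          mul_le_mul_of_nonneg_left key (by positivity)
      _ = (Smeas Z z ζ' L + ‖ζ - ζ'‖) ^ 2 := by field_simp
  rwa [Real.sqrt_sq (by positivity)] at hfin

private lemma telescope_aux_7 (f : ℕ → ℝ) (N : ℕ) :
    ∑ t ∈ Finset.Icc 1 N, (f (t - 1) - f t) = f 0 - f N := by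
  induction N with
  | zero => simp
  | succ n ih =>
      rw [Finset.sum_Icc_succ_top (by omega : 1 ≤ n + 1), ih]
      simp

end Aux

/-- for approximate proximal-point iterations where each `x̃_t`
approximately minimizes the regularized function `φ(·) + L‖· − x̃_{t−1}‖²` over `X`,
both in objective value (up to `ε²/(24L)`) and in the `S_X`-stationarity measure of
the regularized function (up to `ε/2`), at least one iterate satisfies
`S_X(x̃_t, ∇φ(x̃_t), L) ≤ 3√(LΔ/T) + ε`. -/
theorem stmt_7 {H : Type*} [NormedAddCommGroup H] [InnerProductSpace ℝ H]
    (X : Set H) (hne : X.Nonempty) (hconv : Convex ℝ X)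
    (φ : H → ℝ) (g : H → H) (hbdd : BddBelow (φ '' X))
    (L ε : ℝ) (hL : 0 < L) (hε : 0 < ε)
    (T : ℕ) (hT : 0 < T) (Δ : ℝ)
    (x : ℕ → H) (hmem : ∀ t ≤ T, x t ∈ X)
    (hΔ : φ (x 0) - sInf (φ '' X) ≤ Δ)
    (hi : ∀ t ∈ Finset.Icc 1 T, ∀ x' ∈ X,
      φ (x t) + L * ‖x t - x (t - 1)‖ ^ 2 ≤
        φ x' + L * ‖x' - x (t - 1)‖ ^ 2 + ε ^ 2 / (24 * L))
    (hii : ∀ t ∈ Finset.Icc 1 T,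
      Smeas X (x t) (g (x t) + (2 * L) • (x t - x (t - 1))) L ≤ ε / 2) :
    ∃ t ∈ Finset.Icc 1 T,
      Smeas X (x t) (g (x t)) L ≤ 3 * Real.sqrt (L * Δ / T) + ε := by
  have hInf_le : ∀ t, t ≤ T → sInf (φ '' X) ≤ φ (x t) := fun t ht =>
    csInf_le hbdd ⟨x t, hmem t ht, rfl⟩
  have hΔ0 : 0 ≤ Δ := le_trans (by linarith [hInf_le 0 (Nat.zero_le T)]) hΔ
  have hTpos : (0:ℝ) < T := by exact_mod_cast hT
  -- per-step descent
  have hdesc : ∀ t ∈ Finset.Icc 1 T,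
      L * ‖x t - x (t - 1)‖ ^ 2 ≤ (φ (x (t - 1)) - φ (x t)) + ε ^ 2 / (24 * L) := by
    intro t ht
    rw [Finset.mem_Icc] at ht
    have hprev : x (t - 1) ∈ X := hmem (t - 1) (le_trans (Nat.sub_le t 1) ht.2)
    have h := hi t (Finset.mem_Icc.mpr ht) (x (t - 1)) hprev
    simp only [sub_self, norm_zero] at h
    nlinarith [h]
  -- sum the descent inequalities
  have hsum : ∑ t ∈ Finset.Icc 1 T, L * ‖x t - x (t - 1)‖ ^ 2
      ≤ Δ + T * (ε ^ 2 / (24 * L)) := by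
    have h1 : ∑ t ∈ Finset.Icc 1 T, L * ‖x t - x (t - 1)‖ ^ 2
        ≤ ∑ t ∈ Finset.Icc 1 T, ((φ (x (t - 1)) - φ (x t)) + ε ^ 2 / (24 * L)) :=
      Finset.sum_le_sum hdesc
    rw [Finset.sum_add_distrib, telescope_aux_7 (fun t => φ (x t)) T,
      Finset.sum_const, Nat.card_Icc] at h1
    simp only [Nat.add_sub_cancel, nsmul_eq_mul] at h1
    have h2 : φ (x 0) - φ (x T) ≤ Δ := by
      have := hInf_le T le_rfl
      linarith
    linarith
  -- pick the minimizing step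
  obtain ⟨t0, ht0, hmin⟩ := Finset.exists_min_image (Finset.Icc 1 T)
    (fun t => ‖x t - x (t - 1)‖ ^ 2) ⟨1, Finset.mem_Icc.mpr ⟨le_rfl, hT⟩⟩
  refine ⟨t0, ht0, ?_⟩
  have ht0' := Finset.mem_Icc.mp ht0
  have ht0X : x t0 ∈ X := hmem t0 ht0'.2
  -- bound on the min displacement
  have hDbound : L * ((T : ℝ) * ‖x t0 - x (t0 - 1)‖ ^ 2) ≤ Δ + T * (ε ^ 2 / (24 * L)) := by
    have h1 : ∑ t ∈ Finset.Icc 1 T, L * ‖x t0 - x (t0 - 1)‖ ^ 2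
        ≤ ∑ t ∈ Finset.Icc 1 T, L * ‖x t - x (t - 1)‖ ^ 2 :=
      Finset.sum_le_sum fun t ht => mul_le_mul_of_nonneg_left (hmin t ht) hL.le
    rw [Finset.sum_const, Nat.card_Icc] at h1
    simp only [Nat.add_sub_cancel, nsmul_eq_mul] at h1
    calc L * ((T : ℝ) * ‖x t0 - x (t0 - 1)‖ ^ 2)
        = (T : ℝ) * (L * ‖x t0 - x (t0 - 1)‖ ^ 2) := by ring
      _ ≤ Δ + T * (ε ^ 2 / (24 * L)) := le_trans h1 hsum
  have hD : L * ‖x t0 - x (t0 - 1)‖ ^ 2 ≤ Δ / T + ε ^ 2 / (24 * L) := by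
    rw [div_add' _ _ _ (ne_of_gt hTpos), le_div_iff₀ hTpos]
    nlinarith [hDbound]
  -- perturbation of the stationarity measure
  have hpert := Smeas_perturb_7 X hconv (x t0) ht0X (g (x t0))
    (g (x t0) + (2 * L) • (x t0 - x (t0 - 1))) L hL
  have hnorm : ‖g (x t0) - (g (x t0) + (2 * L) • (x t0 - x (t0 - 1)))‖
      = 2 * L * ‖x t0 - x (t0 - 1)‖ := by
    rw [sub_add_cancel_left, norm_neg, norm_smul, Real.norm_eq_abs,
      abs_of_pos (by linarith)]
  have hii0 := hii t0 ht0
  -- final numeric bound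
  have hR2 : (Real.sqrt (L * Δ / T)) ^ 2 = L * Δ / T :=
    Real.sq_sqrt (by positivity)
  have hR0 : 0 ≤ Real.sqrt (L * Δ / T) := Real.sqrt_nonneg _
  have hd0 : 0 ≤ ‖x t0 - x (t0 - 1)‖ := norm_nonneg _
  have hkey : 2 * L * ‖x t0 - x (t0 - 1)‖ ≤ 3 * Real.sqrt (L * Δ / T) + ε / 2 := by
    have hsq : (2 * L * ‖x t0 - x (t0 - 1)‖) ^ 2
        ≤ (3 * Real.sqrt (L * Δ / T) + ε / 2) ^ 2 := by
      have h1 : (2 * L * ‖x t0 - x (t0 - 1)‖) ^ 2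
          = 4 * L * (L * ‖x t0 - x (t0 - 1)‖ ^ 2) := by ring
      rw [h1]
      have h2 : 4 * L * (L * ‖x t0 - x (t0 - 1)‖ ^ 2)
          ≤ 4 * L * (Δ / T + ε ^ 2 / (24 * L)) :=
        mul_le_mul_of_nonneg_left hD (by positivity)
      have h3 : 4 * L * (Δ / T + ε ^ 2 / (24 * L)) = 4 * (L * Δ / T) + ε ^ 2 / 6 := by
        field_simp; ring
      have h4 : L * Δ / T = (Real.sqrt (L * Δ / T)) ^ 2 := hR2.symm
      nlinarith [mul_nonneg hR0 hε.le]
    have ha0 : 0 ≤ 2 * L * ‖x t0 - x (t0 - 1)‖ := by positivity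
    have hc0 : 0 ≤ 3 * Real.sqrt (L * Δ / T) + ε / 2 := by positivity
    have := Real.sqrt_le_sqrt hsq
    rwa [Real.sqrt_sq ha0, Real.sqrt_sq hc0] at this
  calc Smeas X (x t0) (g (x t0)) L
      ≤ Smeas X (x t0) (g (x t0) + (2 * L) • (x t0 - x (t0 - 1))) L
          + ‖g (x t0) - (g (x t0) + (2 * L) • (x t0 - x (t0 - 1)))‖ := hpert
    _ ≤ ε / 2 + 2 * L * ‖x t0 - x (t0 - 1)‖ := by rw [hnorm]; linarith
    _ ≤ ε / 2 + (3 * Real.sqrt (L * Δ / T) + ε / 2) := by linarith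
    _ = 3 * Real.sqrt (L * Δ / T) + ε := by ring
end

section
/- Let X be a nonempty convex subset of a real inner product space E and Y a nonempty compact convex subset of a real inner product space G with ȳ ∈ Y and ‖y − ȳ‖ ≤ 2R_y for all y ∈ Y, where R_y > 0. Let F : X × Y → ℝ be continuous in y for each fixed x, let ε_y > 0, L_xx > 0, and define F^reg(x, y) := F(x, y) − (ε_y/(2R_y))‖y − ȳ‖² and φ(x) := max_{y ∈ Y} F(x, y). Let T be a positive integer, x̂₀ ∈ X, and for t ∈ {1, …, T} let (x̂_t, ŷ_t) ∈ X × Y be a saddle point of (x, y) ↦ F^reg(x, y) + L_xx‖x − x̂_{t−1}‖² on X × Y. If φ is bounded below on X and Δ ≥ φ(x̂₀) − inf_{x ∈ X} φ(x), then (1/T) Σ_{t=1}^T ‖x̂_t − x̂_{t−1}‖² ≤ (Δ + 2 ε_y R_y)/(L_xx T); in particular min_{t ∈ {1,…,T}} ‖x̂_t − x̂_{t−1}‖² ≤ (Δ + 2 ε_y R_y)/(L_xx T). -/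
open RealInnerProductSpace

/-- conceptual primal-dual proximal-point iteration.  With
`F^reg(x, y) = F(x, y) − (ε_y/(2R_y))‖y − ȳ‖²` and `(x̂_t, ŷ_t)` a saddle point of
`(x, y) ↦ F^reg(x, y) + L_xx‖x − x̂_{t−1}‖²` on `X × Y` for each `t ∈ {1,…,T}`, the
average squared primal step length is at most `(Δ + 2 ε_y R_y)/(L_xx T)`; in
particular some step satisfies this bound. -/
theorem stmt_9 {E G : Type*} [NormedAddCommGroup E] [InnerProductSpace ℝ E]
    [NormedAddCommGroup G] [InnerProductSpace ℝ G]
    (X : Set E) (hXne : X.Nonempty) (hXconv : Convex ℝ X)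
    (Y : Set G) (hYne : Y.Nonempty) (hYcomp : IsCompact Y) (hYconv : Convex ℝ Y)
    (ybar : G) (hybar : ybar ∈ Y)
    (Ry : ℝ) (hRy : 0 < Ry) (hYrad : ∀ y ∈ Y, ‖y - ybar‖ ≤ 2 * Ry)
    (F : E → G → ℝ) (hFcont : ∀ x, ContinuousOn (F x) Y)
    (εy Lxx : ℝ) (hεy : 0 < εy) (hLxx : 0 < Lxx)
    (Freg : E → G → ℝ)
    (hFreg : ∀ x y, Freg x y = F x y - εy / (2 * Ry) * ‖y - ybar‖ ^ 2)
    (φ : E → ℝ) (hφ : ∀ x, φ x = sSup ((F x) '' Y))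
    (T : ℕ) (hT : 0 < T)
    (xh : ℕ → E) (yh : ℕ → G)
    (hx0 : xh 0 ∈ X)
    (hxmem : ∀ t ∈ Finset.Icc 1 T, xh t ∈ X)
    (hymem : ∀ t ∈ Finset.Icc 1 T, yh t ∈ Y)
    (hsad1 : ∀ t ∈ Finset.Icc 1 T, ∀ y ∈ Y, Freg (xh t) y ≤ Freg (xh t) (yh t))
    (hsad2 : ∀ t ∈ Finset.Icc 1 T, ∀ x ∈ X,
      Freg (xh t) (yh t) + Lxx * ‖xh t - xh (t - 1)‖ ^ 2 ≤
        Freg x (yh t) + Lxx * ‖x - xh (t - 1)‖ ^ 2)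
    (hbdd : BddBelow (φ '' X))
    (Δ : ℝ) (hΔ : φ (xh 0) - sInf (φ '' X) ≤ Δ) :
    (1 / (T : ℝ)) * ∑ t ∈ Finset.Icc 1 T, ‖xh t - xh (t - 1)‖ ^ 2 ≤
        (Δ + 2 * εy * Ry) / (Lxx * T) ∧
      ∃ t ∈ Finset.Icc 1 T, ‖xh t - xh (t - 1)‖ ^ 2 ≤ (Δ + 2 * εy * Ry) / (Lxx * T) := by
  set g : ℕ → ℝ := fun t => if t = 0 then φ (xh 0) else Freg (xh t) (yh t) with hg
  have hbddA : ∀ x, BddAbove (F x '' Y) := fun x =>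
    (hYcomp.image_of_continuousOn (hFcont x)).bddAbove
  -- key per-step inequality
  have key : ∀ t ∈ Finset.Icc 1 T, Lxx * ‖xh t - xh (t - 1)‖ ^ 2 ≤ g (t - 1) - g t := by
    intro t ht
    obtain ⟨ht1, htT⟩ := Finset.mem_Icc.mp ht
    have hxprev : xh (t - 1) ∈ X := by
      rcases Nat.eq_or_lt_of_le ht1 with h | h
      · simpa [← h] using hx0
      · exact hxmem (t - 1)
          (Finset.mem_Icc.mpr ⟨Nat.le_sub_one_of_lt h, le_trans (Nat.sub_le t 1) htT⟩)
    have h2 := hsad2 t ht (xh (t - 1)) hxprev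
    simp only [sub_self, norm_zero] at h2
    have hstep : Freg (xh t) (yh t) + Lxx * ‖xh t - xh (t - 1)‖ ^ 2 ≤
        Freg (xh (t - 1)) (yh t) := by nlinarith [h2]
    have htne : ¬ (t = 0) := by omega
    have hgt : g t = Freg (xh t) (yh t) := by simp [hg, htne]
    have hprev : Freg (xh (t - 1)) (yh t) ≤ g (t - 1) := by
      rcases Nat.eq_or_lt_of_le ht1 with h | h
      · have ht1' : t = 1 := h.symm
        subst ht1'
        have hy1 : yh 1 ∈ Y := hymem 1 ht
        have hpen : 0 ≤ εy / (2 * Ry) * ‖yh 1 - ybar‖ ^ 2 := by positivity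
        have hle : F (xh 0) (yh 1) ≤ φ (xh 0) := by
          rw [hφ]
          exact le_csSup (hbddA _) ⟨yh 1, hy1, rfl⟩
        simp only [hg, if_pos rfl]
        rw [hFreg]
        norm_num
        linarith
      · have htm : t - 1 ∈ Finset.Icc 1 T :=
          Finset.mem_Icc.mpr ⟨Nat.le_sub_one_of_lt h, le_trans (Nat.sub_le t 1) htT⟩
        have hne : ¬ (t - 1 = 0) := by omega
        simp only [hg, if_neg hne]
        exact hsad1 (t - 1) htm (yh t) (hymem t ht)
    rw [hgt]
    linarith
  -- telescoping sum
  have hsum : Lxx * ∑ t ∈ Finset.Icc 1 T, ‖xh t - xh (t - 1)‖ ^ 2 ≤ g 0 - g T := by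
    rw [Finset.mul_sum]
    calc ∑ t ∈ Finset.Icc 1 T, Lxx * ‖xh t - xh (t - 1)‖ ^ 2
        ≤ ∑ t ∈ Finset.Icc 1 T, (g (t - 1) - g t) := Finset.sum_le_sum key
      _ = ∑ i ∈ Finset.range T, (g i - g (i + 1)) := by
          rw [← Finset.Ico_add_one_right_eq_Icc, Finset.sum_Ico_eq_sum_range]
          refine Finset.sum_congr (by simp) fun i _ => ?_
          have h1 : 1 + i - 1 = i := by omega
          rw [h1, Nat.add_comm 1 i]
      _ = g 0 - g T := Finset.sum_range_sub' g T
  have hTmem : T ∈ Finset.Icc 1 T := Finset.mem_Icc.mpr ⟨hT, le_refl T⟩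
  have hTne : ¬ (T = 0) := by omega
  -- lower bound on g T
  have hgT : φ (xh T) - 2 * εy * Ry ≤ g T := by
    have hgTeq : g T = Freg (xh T) (yh T) := by simp [hg, hTne]
    rw [hgTeq, hφ]
    have : sSup (F (xh T) '' Y) ≤ Freg (xh T) (yh T) + 2 * εy * Ry := by
      apply csSup_le (hYne.image _)
      rintro b ⟨y, hy, rfl⟩
      have h1 := hsad1 T hTmem y hy
      have hrad := hYrad y hy
      have hnn : (0:ℝ) ≤ ‖y - ybar‖ := norm_nonneg _
      have hpen : εy / (2 * Ry) * ‖y - ybar‖ ^ 2 ≤ 2 * εy * Ry := by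
        have hsq : ‖y - ybar‖ ^ 2 ≤ (2 * Ry) ^ 2 := by nlinarith
        rw [div_mul_eq_mul_div, div_le_iff₀ (by positivity)]
        nlinarith [hsq, hεy.le]
      rw [hFreg] at h1
      linarith
    linarith
  have hinf : sInf (φ '' X) ≤ φ (xh T) := csInf_le hbdd ⟨xh T, hxmem T hTmem, rfl⟩
  have hg0 : g 0 = φ (xh 0) := by simp [hg]
  have hmain : Lxx * ∑ t ∈ Finset.Icc 1 T, ‖xh t - xh (t - 1)‖ ^ 2 ≤ Δ + 2 * εy * Ry := by
    rw [hg0] at hsum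
    linarith
  have hTpos : (0:ℝ) < T := by exact_mod_cast hT
  constructor
  · have h1 : (1 / (T:ℝ)) * ∑ t ∈ Finset.Icc 1 T, ‖xh t - xh (t - 1)‖ ^ 2 =
        (Lxx * ∑ t ∈ Finset.Icc 1 T, ‖xh t - xh (t - 1)‖ ^ 2) / (Lxx * T) := by
      field_simp
    rw [h1]
    exact div_le_div_of_nonneg_right hmain (by positivity) |>.trans_eq rfl
  · apply Finset.exists_le_of_sum_le (Finset.nonempty_Icc.mpr hT)
    have : ∑ t ∈ Finset.Icc 1 T, (Δ + 2 * εy * Ry) / (Lxx * T) =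
        (Δ + 2 * εy * Ry) / Lxx := by
      rw [Finset.sum_const, Nat.card_Icc]
      simp only [Nat.add_sub_cancel, nsmul_eq_mul]
      field_simp
    rw [this, le_div_iff₀ hLxx]
    linarith [hmain]
end

section
/- In the setting of the conceptual primal-dual proximal-point iteration, assume additionally that for each fixed y ∈ Y the map x ↦ F(x, y) is differentiable with partial gradient ∇_x F(x, y), and that each saddle point (x̂_t, ŷ_t) satisfies the primal first-order optimality condition ⟨∇_x F(x̂_t, ŷ_t) + 2L_xx (x̂_t − x̂_{t−1}), x − x̂_t⟩ ≥ 0 for all x ∈ X. Then there exists τ ∈ {1, …, T} with S_X(x̂_τ, ∇_x F(x̂_τ, ŷ_τ), L_xx) ≤ 2 √( L_xx (Δ + 2 ε_y R_y) / T ). -/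
open RealInnerProductSpace

/-- in the setting of the conceptual primal-dual proximal-point
iteration (see Statement 9), if moreover `x ↦ F(x, y)` is differentiable with
partial gradient `gx x y` and each saddle point satisfies the primal first-order
optimality condition, then some `τ ∈ {1,…,T}` satisfies
`S_X(x̂_τ, ∇_x F(x̂_τ, ŷ_τ), L_xx) ≤ 2 √(L_xx (Δ + 2 ε_y R_y)/T)`. -/
theorem stmt_10 {E G : Type*} [NormedAddCommGroup E] [InnerProductSpace ℝ E]
    [NormedAddCommGroup G] [InnerProductSpace ℝ G]
    (X : Set E) (hXne : X.Nonempty) (hXconv : Convex ℝ X)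
    (Y : Set G) (hYne : Y.Nonempty) (hYcomp : IsCompact Y) (hYconv : Convex ℝ Y)
    (ybar : G) (hybar : ybar ∈ Y)
    (Ry : ℝ) (hRy : 0 < Ry) (hYrad : ∀ y ∈ Y, ‖y - ybar‖ ≤ 2 * Ry)
    (F : E → G → ℝ) (hFcont : ∀ x, ContinuousOn (F x) Y)
    (gx : E → G → E)
    (εy Lxx : ℝ) (hεy : 0 < εy) (hLxx : 0 < Lxx)
    (Freg : E → G → ℝ)
    (hFreg : ∀ x y, Freg x y = F x y - εy / (2 * Ry) * ‖y - ybar‖ ^ 2)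
    (φ : E → ℝ) (hφ : ∀ x, φ x = sSup ((F x) '' Y))
    (T : ℕ) (hT : 0 < T)
    (xh : ℕ → E) (yh : ℕ → G)
    (hx0 : xh 0 ∈ X)
    (hxmem : ∀ t ∈ Finset.Icc 1 T, xh t ∈ X)
    (hymem : ∀ t ∈ Finset.Icc 1 T, yh t ∈ Y)
    (hsad1 : ∀ t ∈ Finset.Icc 1 T, ∀ y ∈ Y, Freg (xh t) y ≤ Freg (xh t) (yh t))
    (hsad2 : ∀ t ∈ Finset.Icc 1 T, ∀ x ∈ X,
      Freg (xh t) (yh t) + Lxx * ‖xh t - xh (t - 1)‖ ^ 2 ≤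
        Freg x (yh t) + Lxx * ‖x - xh (t - 1)‖ ^ 2)
    (hfoo : ∀ t ∈ Finset.Icc 1 T, ∀ x ∈ X,
      0 ≤ ⟪gx (xh t) (yh t) + (2 * Lxx) • (xh t - xh (t - 1)), x - xh t⟫)
    (hbdd : BddBelow (φ '' X))
    (Δ : ℝ) (hΔ : φ (xh 0) - sInf (φ '' X) ≤ Δ) :
    ∃ τ ∈ Finset.Icc 1 T,
      Smeas X (xh τ) (gx (xh τ) (yh τ)) Lxx ≤
        2 * Real.sqrt (Lxx * (Δ + 2 * εy * Ry) / T) := by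
  have hTR : (0:ℝ) < T := by exact_mod_cast hT
  set B : ℝ := (Δ + 2 * εy * Ry) / T with hB
  -- the "potential" sequence
  set a : ℕ → ℝ := fun t => if t = 0 then φ (xh 0) else Freg (xh t) (yh t) with ha
  have hmemIcc : ∀ i ∈ Finset.range T, i + 1 ∈ Finset.Icc 1 T := by
    intro i hi
    simp only [Finset.mem_range] at hi
    simp only [Finset.mem_Icc]
    omega
  have hregnn : ∀ y : G, 0 ≤ εy / (2 * Ry) * ‖y - ybar‖ ^ 2 := by
    intro y; positivity
  -- per-step decrease
  have key : ∀ i ∈ Finset.range T, Lxx * ‖xh (i + 1) - xh i‖ ^ 2 ≤ a i - a (i + 1) := by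
    intro i hi
    have hti := hmemIcc i hi
    have hximem : xh i ∈ X := by
      rcases Nat.eq_zero_or_pos i with h0 | h0
      · rw [h0]; exact hx0
      · refine hxmem i ?_
        simp only [Finset.mem_range] at hi
        simp only [Finset.mem_Icc]; omega
    have h2 := hsad2 (i + 1) hti (xh i) hximem
    simp only [Nat.add_sub_cancel, sub_self, norm_zero] at h2
    have hstep : Freg (xh (i + 1)) (yh (i + 1)) + Lxx * ‖xh (i + 1) - xh i‖ ^ 2 ≤
        Freg (xh i) (yh (i + 1)) := by
      have h0 : (0:ℝ) ^ 2 = 0 := by norm_num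
      linarith [h2]
    have hub : Freg (xh i) (yh (i + 1)) ≤ a i := by
      rcases Nat.eq_zero_or_pos i with h0 | h0
      · subst h0
        have hmem : F (xh 0) (yh 1) ∈ (F (xh 0)) '' Y :=
          ⟨yh 1, hymem 1 hti, rfl⟩
        have hFle : F (xh 0) (yh 1) ≤ φ (xh 0) := by
          rw [hφ]
          exact le_csSup ((hYcomp.image_of_continuousOn (hFcont (xh 0))).bddAbove) hmem
        have := hregnn (yh 1)
        simp only [ha, if_pos rfl]
        rw [hFreg]
        linarith
      · have hiIcc : i ∈ Finset.Icc 1 T := by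
          simp only [Finset.mem_range] at hi
          simp only [Finset.mem_Icc]; omega
        have := hsad1 i hiIcc (yh (i + 1)) (hymem (i + 1) hti)
        simp only [ha, if_neg (Nat.pos_iff_ne_zero.mp h0)]
        exact this
    have : a (i + 1) = Freg (xh (i + 1)) (yh (i + 1)) := by
      simp [ha]
    linarith
  -- telescoping
  have hsum : ∑ i ∈ Finset.range T, Lxx * ‖xh (i + 1) - xh i‖ ^ 2 ≤ a 0 - a T := by
    calc ∑ i ∈ Finset.range T, Lxx * ‖xh (i + 1) - xh i‖ ^ 2
        ≤ ∑ i ∈ Finset.range T, (a i - a (i + 1)) := Finset.sum_le_sum key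
      _ = a 0 - a T := Finset.sum_range_sub' a T
  -- bound a 0 - a T ≤ Δ + 2 εy Ry
  have hTIcc : T ∈ Finset.Icc 1 T := by
    simp only [Finset.mem_Icc]; omega
  have haT : a T = Freg (xh T) (yh T) := by
    simp only [ha, if_neg hT.ne']
  have hφT : φ (xh T) ≤ Freg (xh T) (yh T) + 2 * εy * Ry := by
    rw [hφ]
    refine csSup_le (hYne.image _) ?_
    rintro v ⟨y, hy, rfl⟩
    have h1 := hsad1 T hTIcc y hy
    have h2 : ‖y - ybar‖ ≤ 2 * Ry := hYrad y hy
    have h3 : (0:ℝ) ≤ ‖y - ybar‖ := norm_nonneg _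
    have h4 : εy / (2 * Ry) * ‖y - ybar‖ ^ 2 ≤ 2 * εy * Ry := by
      have hsq : ‖y - ybar‖ ^ 2 ≤ 4 * Ry ^ 2 := by nlinarith
      have hpos : (0:ℝ) ≤ εy / (2 * Ry) := by positivity
      have h5 := mul_le_mul_of_nonneg_left hsq hpos
      have heq : εy / (2 * Ry) * (4 * Ry ^ 2) = 2 * εy * Ry := by
        field_simp; ring
      linarith
    have h5 := hFreg (xh T) y
    linarith
  have hinf : sInf (φ '' X) ≤ φ (xh T) :=
    csInf_le hbdd ⟨xh T, hxmem T hTIcc, rfl⟩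
  have htail : a 0 - a T ≤ Δ + 2 * εy * Ry := by
    have h0 : a 0 = φ (xh 0) := by simp only [ha, if_pos rfl]
    rw [h0, haT]
    linarith
  -- extract a good index
  have hsum2 : ∑ i ∈ Finset.range T, Lxx * ‖xh (i + 1) - xh i‖ ^ 2 ≤
      ∑ _i ∈ Finset.range T, B := by
    rw [Finset.sum_const, Finset.card_range, nsmul_eq_mul, hB,
      mul_div_cancel₀ _ (ne_of_gt hTR)]
    linarith
  obtain ⟨i, hi, hile⟩ := Finset.exists_le_of_sum_le (Finset.nonempty_range_iff.mpr hT.ne') hsum2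
  refine ⟨i + 1, hmemIcc i hi, ?_⟩
  -- now the stationarity bound
  set τ := i + 1 with hτ
  have hτIcc : τ ∈ Finset.Icc 1 T := hmemIcc i hi
  set d : E := xh τ - xh i with hd
  have hdnn : (0:ℝ) ≤ ‖d‖ := norm_nonneg _
  have hBnn : 0 ≤ B := le_trans (by positivity) hile
  -- sup bound
  set S : ℝ := sSup ((fun x' : E => -⟪gx (xh τ) (yh τ), x' - xh τ⟫ -
      Lxx / 2 * ‖x' - xh τ‖ ^ 2) '' X) with hS
  have hsupb : S ≤ 2 * Lxx * ‖d‖ ^ 2 := by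
    rw [hS]
    refine csSup_le (hXne.image _) ?_
    rintro v ⟨x, hx, rfl⟩
    have hf := hfoo τ hτIcc x hx
    rw [show τ - 1 = i from rfl] at hf
    rw [inner_add_left, real_inner_smul_left] at hf
    have hip : ⟪xh τ - xh i, x - xh τ⟫ ≤ ‖d‖ * ‖x - xh τ‖ := by
      rw [hd]
      exact real_inner_le_norm _ _
    have hun : (0:ℝ) ≤ ‖x - xh τ‖ := norm_nonneg _
    nlinarith [hf, hip, hun, hdnn, hLxx, sq_nonneg (‖x - xh τ‖ - 2 * ‖d‖)]
  have hSle : Smeas X (xh τ) (gx (xh τ) (yh τ)) Lxx ≤ 2 * Lxx * ‖d‖ := by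
    have hSm : Smeas X (xh τ) (gx (xh τ) (yh τ)) Lxx = Real.sqrt (2 * Lxx * S) := by
      rw [Smeas, hS]
    rw [hSm]
    have h1 : 2 * Lxx * S ≤ (2 * Lxx * ‖d‖) ^ 2 := by nlinarith [hsupb, hLxx]
    calc Real.sqrt (2 * Lxx * S)
        ≤ Real.sqrt ((2 * Lxx * ‖d‖) ^ 2) := Real.sqrt_le_sqrt h1
      _ = 2 * Lxx * ‖d‖ := Real.sqrt_sq (by positivity)
  refine hSle.trans ?_
  -- 2 Lxx ‖d‖ ≤ 2 √(Lxx * B)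
  have hfinal : 2 * Lxx * ‖d‖ ≤ 2 * Real.sqrt (Lxx * B) := by
    have h1 : (2 * Lxx * ‖d‖) ^ 2 ≤ (2 * Real.sqrt (Lxx * B)) ^ 2 := by
      have h2 : Real.sqrt (Lxx * B) ^ 2 = Lxx * B :=
        Real.sq_sqrt (mul_nonneg hLxx.le hBnn)
      have h3 : Lxx * ‖d‖ ^ 2 ≤ B := by
        rw [hd]; exact hile
      nlinarith [h2, h3, hLxx]
    have h4 : (0:ℝ) ≤ 2 * Real.sqrt (Lxx * B) :=
      mul_nonneg (by norm_num) (Real.sqrt_nonneg _)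
    have h5 : (0:ℝ) ≤ 2 * Lxx * ‖d‖ :=
      mul_nonneg (mul_nonneg (by norm_num) hLxx.le) hdnn
    exact (pow_le_pow_iff_left₀ h5 h4 two_ne_zero).mp h1
  calc 2 * Lxx * ‖d‖ ≤ 2 * Real.sqrt (Lxx * B) := hfinal
    _ = 2 * Real.sqrt (Lxx * (Δ + 2 * εy * Ry) / T) := by
        rw [hB, mul_div_assoc]
end

section
/- Let Y be a nonempty convex subset of a real inner product space G, let ȳ, ŷ ∈ Y with ‖ŷ − ȳ‖ ≤ 2R_y, where R_y > 0, let g ∈ G, ε_y > 0 and L_yy > 0. Suppose the dual first-order optimality condition holds: ⟨g − (ε_y/R_y)(ŷ − ȳ), y − ŷ⟩ ≤ 0 for all y ∈ Y. Then S_Y(ŷ, −g, L_yy) ≤ 2 ε_y. -/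
open RealInnerProductSpace

/-- if `ŷ ∈ Y` satisfies the dual first-order optimality condition
`⟨g − (ε_y/R_y)(ŷ − ȳ), y − ŷ⟩ ≤ 0` for all `y ∈ Y`, and `‖ŷ − ȳ‖ ≤ 2R_y`, then
`S_Y(ŷ, −g, L_yy) ≤ 2 ε_y`. -/
theorem stmt_11 {G : Type*} [NormedAddCommGroup G] [InnerProductSpace ℝ G]
    (Y : Set G) (hne : Y.Nonempty) (hconv : Convex ℝ Y)
    (ybar yh : G) (hybar : ybar ∈ Y) (hyh : yh ∈ Y)
    (Ry : ℝ) (hRy : 0 < Ry) (hdist : ‖yh - ybar‖ ≤ 2 * Ry)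
    (g : G) (εy Lyy : ℝ) (hεy : 0 < εy) (hLyy : 0 < Lyy)
    (hopt : ∀ y ∈ Y, ⟪g - (εy / Ry) • (yh - ybar), y - yh⟫ ≤ 0) :
    Smeas Y yh (-g) Lyy ≤ 2 * εy := by
  have hsup : sSup ((fun z' : G => -⟪-g, z' - yh⟫ - Lyy / 2 * ‖z' - yh‖ ^ 2) '' Y)
      ≤ 2 * εy ^ 2 / Lyy := by
    apply Real.sSup_le
    · rintro v ⟨y, hy, rfl⟩
      have h1 := hopt y hy
      rw [inner_sub_left, real_inner_smul_left, sub_nonpos] at h1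
      have h2 : ⟪yh - ybar, y - yh⟫ ≤ ‖yh - ybar‖ * ‖y - yh‖ := real_inner_le_norm _ _
      have h3 : ⟪g, y - yh⟫ ≤ 2 * εy * ‖y - yh‖ := by
        calc ⟪g, y - yh⟫ ≤ εy / Ry * ⟪yh - ybar, y - yh⟫ := h1
          _ ≤ εy / Ry * (‖yh - ybar‖ * ‖y - yh‖) := by
              apply mul_le_mul_of_nonneg_left h2 (by positivity)
          _ ≤ εy / Ry * ((2 * Ry) * ‖y - yh‖) := by
              apply mul_le_mul_of_nonneg_left
                (mul_le_mul_of_nonneg_right hdist (norm_nonneg _)) (by positivity)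
          _ = 2 * εy * ‖y - yh‖ := by field_simp
      have h4 : 2 * εy * ‖y - yh‖ - Lyy / 2 * ‖y - yh‖ ^ 2 ≤ 2 * εy ^ 2 / Lyy := by
        have h5 : 0 ≤ Lyy / 2 * (‖y - yh‖ - 2 * εy / Lyy) ^ 2 := by positivity
        have : Lyy / 2 * (‖y - yh‖ - 2 * εy / Lyy) ^ 2 =
            Lyy / 2 * ‖y - yh‖ ^ 2 - 2 * εy * ‖y - yh‖ + 2 * εy ^ 2 / Lyy := by
          field_simp; ring
        nlinarith
      simp only [inner_neg_left, neg_neg]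
      linarith
    · positivity
  have hkey : 2 * Lyy * sSup ((fun z' : G => -⟪-g, z' - yh⟫ - Lyy / 2 * ‖z' - yh‖ ^ 2) '' Y)
      ≤ (2 * εy) ^ 2 := by
    calc 2 * Lyy * _ ≤ 2 * Lyy * (2 * εy ^ 2 / Lyy) :=
          mul_le_mul_of_nonneg_left hsup (by positivity)
      _ = (2 * εy) ^ 2 := by field_simp
  calc Smeas Y yh (-g) Lyy ≤ Real.sqrt ((2 * εy) ^ 2) := Real.sqrt_le_sqrt hkey
    _ = 2 * εy := Real.sqrt_sq (by positivity)
end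

section
/- Let Y be a nonempty convex subset of a real inner product space G with ‖y' − y‖ ≤ 2R_y for all y, y' ∈ Y, where R_y > 0. Let M > 0, δ > 0, let ψ : Y → ℝ be differentiable with gradient ∇ψ and satisfy 0 ≤ −ψ(y') + ψ(y) + ⟨∇ψ(y), y' − y⟩ ≤ (M/2)‖y' − y‖² for all y, y' ∈ Y (i.e., ψ is concave and M-smooth on Y). Let ψ̃ : Y → ℝ and ∇̃ψ : Y → G satisfy δ/4 ≤ ψ̃(y) − ψ(y) ≤ 3δ/4 and ‖∇̃ψ(y) − ∇ψ(y)‖ ≤ δ/(8R_y) for all y ∈ Y. Then for all y, y' ∈ Y: 0 ≤ −ψ(y') + ψ̃(y) + ⟨∇̃ψ(y), y' − y⟩ ≤ (M/2)‖y' − y‖² + δ; that is, (−ψ̃, −∇̃ψ) is a δ-inexact first-order oracle for the convex function −ψ. -/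
open RealInnerProductSpace

/-- if `ψ` is concave and `M`-smooth on `Y` (in the sense of the
two-sided linearization inequality), and `(ψ̃, ∇̃ψ)` approximates `(ψ, ∇ψ)` with
`δ/4 ≤ ψ̃ − ψ ≤ 3δ/4` and `‖∇̃ψ − ∇ψ‖ ≤ δ/(8R_y)` on `Y` (whose diameter is at
most `2R_y`), then `(−ψ̃, −∇̃ψ)` is a `δ`-inexact first-order oracle for the convex
function `−ψ`. -/
theorem stmt_12 {G : Type*} [NormedAddCommGroup G] [InnerProductSpace ℝ G]
    (Y : Set G) (hne : Y.Nonempty) (hconv : Convex ℝ Y)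
    (Ry : ℝ) (hRy : 0 < Ry) (hdiam : ∀ y ∈ Y, ∀ y' ∈ Y, ‖y' - y‖ ≤ 2 * Ry)
    (M δ : ℝ) (hM : 0 < M) (hδ : 0 < δ)
    (ψ : G → ℝ) (dψ : G → G)
    (hψ : ∀ y ∈ Y, ∀ y' ∈ Y,
      0 ≤ -ψ y' + ψ y + ⟪dψ y, y' - y⟫ ∧
      -ψ y' + ψ y + ⟪dψ y, y' - y⟫ ≤ M / 2 * ‖y' - y‖ ^ 2)
    (ψt : G → ℝ) (dψt : G → G)
    (hval : ∀ y ∈ Y, δ / 4 ≤ ψt y - ψ y ∧ ψt y - ψ y ≤ 3 * δ / 4)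
    (hgrad : ∀ y ∈ Y, ‖dψt y - dψ y‖ ≤ δ / (8 * Ry)) :
    ∀ y ∈ Y, ∀ y' ∈ Y,
      0 ≤ -ψ y' + ψt y + ⟪dψt y, y' - y⟫ ∧
      -ψ y' + ψt y + ⟪dψt y, y' - y⟫ ≤ M / 2 * ‖y' - y‖ ^ 2 + δ := by
  intro y hy y' hy'
  obtain ⟨h1, h2⟩ := hψ y hy y' hy'
  obtain ⟨h3, h4⟩ := hval y hy
  have hg := hgrad y hy
  have hd := hdiam y hy y' hy'
  have herr : |⟪dψt y - dψ y, y' - y⟫| ≤ δ / 4 := by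
    calc |⟪dψt y - dψ y, y' - y⟫| ≤ ‖dψt y - dψ y‖ * ‖y' - y‖ := abs_real_inner_le_norm _ _
    _ ≤ δ / (8 * Ry) * (2 * Ry) := by
        apply mul_le_mul hg hd (norm_nonneg _)
        positivity
    _ = δ / 4 := by field_simp; ring
  have hsplit : ⟪dψt y, y' - y⟫ = ⟪dψ y, y' - y⟫ + ⟪dψt y - dψ y, y' - y⟫ := by
    rw [inner_sub_left]; ring
  rw [abs_le] at herr
  constructor <;> [nlinarith [herr.1]; nlinarith [herr.2]]
end

section
/- Let Y be a nonempty convex subset of a real inner product space G, let ȳ, ŷ ∈ Y with ‖ŷ − ȳ‖ ≤ 2R_y, where R_y > 0, let ε_y > 0, L_yy > 0, and let g, g̃ ∈ G. Suppose (i) ‖g̃ − g‖ ≤ ε_y, and (ii) S_Y(ŷ, −(g − (ε_y/R_y)(ŷ − ȳ)), L_yy) ≤ ε_y/3. Then S_Y(ŷ, −g̃, L_yy)² ≤ 21 ε_y², and in particular S_Y(ŷ, −g̃, L_yy) ≤ 5 ε_y. -/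
open RealInnerProductSpace

private lemma aux_bdd {G : Type*} [NormedAddCommGroup G] [InnerProductSpace ℝ G]
    (Y : Set G) (yh w : G) (L : ℝ) (hL : 0 < L) :
    BddAbove ((fun y' : G => ⟪w, y' - yh⟫ - L / 2 * ‖y' - yh‖ ^ 2) '' Y) := by
  refine ⟨‖w‖ ^ 2 / (2 * L), ?_⟩
  rintro _ ⟨y', hy', rfl⟩
  have hcs := real_inner_le_norm w (y' - yh)
  rw [le_div_iff₀ (by positivity : (0:ℝ) < 2 * L)]
  nlinarith [sq_nonneg (L * ‖y' - yh‖ - ‖w‖), norm_nonneg (y' - yh), hL]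


/-- if `‖g̃ − g‖ ≤ ε_y` and `ŷ` is `ε_y/3`-near-stationary for the
regularized gradient `g − (ε_y/R_y)(ŷ − ȳ)`, then `S_Y(ŷ, −g̃, L_yy)² ≤ 21 ε_y²`,
and in particular `S_Y(ŷ, −g̃, L_yy) ≤ 5 ε_y`. -/
theorem stmt_13 {G : Type*} [NormedAddCommGroup G] [InnerProductSpace ℝ G]
    (Y : Set G) (hne : Y.Nonempty) (hconv : Convex ℝ Y)
    (ybar yh : G) (hybar : ybar ∈ Y) (hyh : yh ∈ Y)
    (Ry : ℝ) (hRy : 0 < Ry) (hdist : ‖yh - ybar‖ ≤ 2 * Ry)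
    (εy Lyy : ℝ) (hεy : 0 < εy) (hLyy : 0 < Lyy)
    (g gt : G)
    (hclose : ‖gt - g‖ ≤ εy)
    (hstat : Smeas Y yh (-(g - (εy / Ry) • (yh - ybar))) Lyy ≤ εy / 3) :
    (Smeas Y yh (-gt) Lyy) ^ 2 ≤ 21 * εy ^ 2 ∧ Smeas Y yh (-gt) Lyy ≤ 5 * εy := by
  classical
  set v : G := g - (εy / Ry) • (yh - ybar) with hv
  set hfun : G → ℝ := fun y' => ⟪v, y' - yh⟫ - Lyy / 2 * ‖y' - yh‖ ^ 2 with hhfun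
  set ffun : G → ℝ := fun y' => ⟪gt, y' - yh⟫ - Lyy / 2 * ‖y' - yh‖ ^ 2 with hffun
  have himg_h : (fun z' : G => -⟪-v, z' - yh⟫ - Lyy / 2 * ‖z' - yh‖ ^ 2) '' Y = hfun '' Y := by
    apply Set.image_congr'
    intro x; simp [hfun, inner_neg_left]
  have himg_f : (fun z' : G => -⟪-gt, z' - yh⟫ - Lyy / 2 * ‖z' - yh‖ ^ 2) '' Y = ffun '' Y := by
    apply Set.image_congr'
    intro x; simp [ffun, inner_neg_left]
  have hbdd_h : BddAbove (hfun '' Y) := aux_bdd Y yh v Lyy hLyy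
  have hbdd_f : BddAbove (ffun '' Y) := aux_bdd Y yh gt Lyy hLyy
  set Sh := sSup (hfun '' Y) with hSh
  set Sf := sSup (ffun '' Y) with hSf
  -- Smeas rewrites
  have hSm_h : Smeas Y yh (-v) Lyy = Real.sqrt (2 * Lyy * Sh) := by
    unfold Smeas; rw [himg_h]
  have hSm_f : Smeas Y yh (-gt) Lyy = Real.sqrt (2 * Lyy * Sf) := by
    unfold Smeas; rw [himg_f]
  -- nonnegativity of sups
  have hfun_yh : hfun yh = 0 := by simp [hfun]
  have ffun_yh : ffun yh = 0 := by simp [ffun]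
  have hSh0 : 0 ≤ Sh := hfun_yh ▸ le_csSup hbdd_h (Set.mem_image_of_mem _ hyh)
  have hSf0 : 0 ≤ Sf := ffun_yh ▸ le_csSup hbdd_f (Set.mem_image_of_mem _ hyh)
  -- from hstat : 2 L Sh ≤ εy²/9
  have hstat' : 2 * Lyy * Sh ≤ εy ^ 2 / 9 := by
    have h1 : Real.sqrt (2 * Lyy * Sh) ≤ εy / 3 := by rw [← hSm_h]; exact hstat
    have h2 : (Real.sqrt (2 * Lyy * Sh)) ^ 2 ≤ (εy / 3) ^ 2 :=
      pow_le_pow_left₀ (Real.sqrt_nonneg _) h1 2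
    rw [Real.sq_sqrt (by positivity)] at h2
    linarith
  -- pointwise bound
  have hpt : ∀ y' ∈ Y, ffun y' ≤ 3 * Sh + 27 * εy ^ 2 / (4 * Lyy) := by
    intro y' hy'
    set d : G := y' - yh with hd
    set t : ℝ := ‖d‖ with ht
    have hy'' : yh + (3:ℝ)⁻¹ • d ∈ Y := by
      have := hconv hyh hy' (by norm_num : (0:ℝ) ≤ 2/3) (by norm_num : (0:ℝ) ≤ 1/3)
        (by norm_num)
      convert this using 1
      rw [hd]; module
    have hmem : hfun (yh + (3:ℝ)⁻¹ • d) ≤ Sh := le_csSup hbdd_h (Set.mem_image_of_mem _ hy'')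
    have hval : hfun (yh + (3:ℝ)⁻¹ • d) = (3:ℝ)⁻¹ * ⟪v, d⟫ - Lyy / 2 * ((3:ℝ)⁻¹ * t) ^ 2 := by
      simp [hfun, real_inner_smul_right, norm_smul, ht]
    have hsplit : ⟪gt, d⟫ - ⟪v, d⟫ = ⟪gt - g, d⟫ + (εy / Ry) * ⟪yh - ybar, d⟫ := by
      rw [hv]; simp [inner_sub_left, real_inner_smul_left]; ring
    have h1 : ⟪gt - g, d⟫ ≤ εy * t :=
      (real_inner_le_norm _ _).trans (mul_le_mul_of_nonneg_right hclose (norm_nonneg d))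
    have h2 : ⟪yh - ybar, d⟫ ≤ 2 * Ry * t :=
      (real_inner_le_norm _ _).trans (mul_le_mul_of_nonneg_right hdist (norm_nonneg d))
    have h2' : (εy / Ry) * ⟪yh - ybar, d⟫ ≤ 2 * εy * t := by
      have := mul_le_mul_of_nonneg_left h2 (by positivity : (0:ℝ) ≤ εy / Ry)
      have heq : εy / Ry * (2 * Ry * t) = 2 * εy * t := by
        field_simp
      linarith [heq ▸ this]
    have hkey : 3 * εy * t - Lyy / 3 * t ^ 2 ≤ 27 * εy ^ 2 / (4 * Lyy) := by
      rw [le_div_iff₀ (by positivity : (0:ℝ) < 4 * Lyy)]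
      nlinarith [sq_nonneg (2 * Lyy * t - 9 * εy), hLyy]
    have hff : ffun y' = ⟪gt, d⟫ - Lyy / 2 * t ^ 2 := by simp [ffun, hd, ht]
    rw [hff]
    linarith [hmem, hval, hsplit, h1, h2', hkey]
  have hSfle : Sf ≤ 3 * Sh + 27 * εy ^ 2 / (4 * Lyy) := by
    apply csSup_le (hne.image _)
    rintro _ ⟨y', hy', rfl⟩
    exact hpt y' hy'
  have hmain : 2 * Lyy * Sf ≤ 21 * εy ^ 2 := by
    have h1 : 2 * Lyy * Sf ≤ 2 * Lyy * (3 * Sh + 27 * εy ^ 2 / (4 * Lyy)) :=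
      mul_le_mul_of_nonneg_left hSfle (by positivity)
    have h2 : 2 * Lyy * (3 * Sh + 27 * εy ^ 2 / (4 * Lyy)) = 6 * (Lyy * Sh) + 27 * εy ^ 2 / 2 := by
      field_simp; ring
    nlinarith [hstat']
  have hsq : (Smeas Y yh (-gt) Lyy) ^ 2 = 2 * Lyy * Sf := by
    rw [hSm_f, Real.sq_sqrt (by positivity)]
  constructor
  · rw [hsq]; exact hmain
  · have hSnn : 0 ≤ Smeas Y yh (-gt) Lyy := Real.sqrt_nonneg _
    calc Smeas Y yh (-gt) Lyy = Real.sqrt ((Smeas Y yh (-gt) Lyy) ^ 2) :=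
          (Real.sqrt_sq hSnn).symm
      _ ≤ Real.sqrt ((5 * εy) ^ 2) := Real.sqrt_le_sqrt (by rw [hsq]; nlinarith)
      _ = 5 * εy := Real.sqrt_sq (by positivity)
end

section
/- Let X be a nonempty closed convex subset of a real Hilbert space H, let L > 0, let φ : X → ℝ be L-weakly convex (i.e., x ↦ φ(x) + (L/2)‖x‖² is convex on X), let x ∈ X, and let x⁺ ∈ X be a minimizer over X of x' ↦ φ(x') + L‖x' − x‖². Set ζ := 2L(x − x⁺). Then S_X(x, ζ, 2L) = W_X(x, ζ, 2L) = ‖ζ‖ = 2L‖x − x⁺‖. -/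
open RealInnerProductSpace

/-- for `φ` `L`-weakly convex on the nonempty closed convex set `X`
in a real Hilbert space, `x ∈ X`, and `x⁺` a minimizer over `X` of
`x' ↦ φ(x') + L‖x' − x‖²`, the Moreau-envelope gradient `ζ := 2L(x − x⁺)` satisfies
`S_X(x, ζ, 2L) = W_X(x, ζ, 2L) = ‖ζ‖ = 2L‖x − x⁺‖`.  Here `proj` is the metric
projection onto `X`, characterized by its variational inequality, so that
`W_X(x, ζ, 2L) = 2L‖x − proj(x − ζ/(2L))‖`. -/
theorem stmt_14 {H : Type*} [NormedAddCommGroup H] [InnerProductSpace ℝ H] [CompleteSpace H]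
    (X : Set H) (hne : X.Nonempty) (hcl : IsClosed X) (hconv : Convex ℝ X)
    (proj : H → H)
    (hproj : ∀ u : H, proj u ∈ X ∧ ∀ w ∈ X, ⟪u - proj u, w - proj u⟫ ≤ 0)
    (L : ℝ) (hL : 0 < L)
    (φ : H → ℝ) (hweak : ConvexOn ℝ X (fun x : H => φ x + L / 2 * ‖x‖ ^ 2))
    (x : H) (hx : x ∈ X)
    (xplus : H) (hxplus : xplus ∈ X)
    (hmin : ∀ x' ∈ X, φ xplus + L * ‖xplus - x‖ ^ 2 ≤ φ x' + L * ‖x' - x‖ ^ 2)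
    (ζ : H) (hζ : ζ = (2 * L) • (x - xplus)) :
    Smeas X x ζ (2 * L) = 2 * L * ‖x - proj (x - (1 / (2 * L)) • ζ)‖ ∧
      2 * L * ‖x - proj (x - (1 / (2 * L)) • ζ)‖ = ‖ζ‖ ∧
      ‖ζ‖ = 2 * L * ‖x - xplus‖ := by
  subst hζ
  have h2L : (0:ℝ) < 2 * L := by linarith
  have hproj_self : ∀ u ∈ X, proj u = u := by
    intro u hu
    have h2 := (hproj u).2 u hu
    have h0 : u - proj u = 0 := real_inner_self_nonpos.mp h2
    exact (sub_eq_zero.mp h0).symm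
  have hpt : x - (1 / (2 * L)) • ((2 * L) • (x - xplus)) = xplus := by
    rw [smul_smul, one_div, inv_mul_cancel₀ (ne_of_gt h2L), one_smul]
    abel
  have hnζ : ‖(2 * L) • (x - xplus)‖ = 2 * L * ‖x - xplus‖ := by
    rw [norm_smul, Real.norm_of_nonneg (le_of_lt h2L)]
  have hproj_eq : proj (x - (1 / (2 * L)) • ((2 * L) • (x - xplus))) = xplus := by
    rw [hpt]; exact hproj_self xplus hxplus
  refine ⟨?_, by rw [hproj_eq, hnζ], hnζ⟩
  rw [hproj_eq]
  unfold Smeas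
  have hval : (fun z' : H => -⟪(2 * L) • (x - xplus), z' - x⟫ -
      (2 * L) / 2 * ‖z' - x‖ ^ 2) xplus = L * ‖x - xplus‖ ^ 2 := by
    simp only [real_inner_smul_left]
    have h1 : ⟪x - xplus, xplus - x⟫ = -‖x - xplus‖ ^ 2 := by
      rw [show xplus - x = -(x - xplus) by abel, inner_neg_right,
        real_inner_self_eq_norm_sq]
    rw [h1, norm_sub_rev xplus x]
    ring
  have hgreat : IsGreatest ((fun z' : H => -⟪(2 * L) • (x - xplus), z' - x⟫ -
      (2 * L) / 2 * ‖z' - x‖ ^ 2) '' X) (L * ‖x - xplus‖ ^ 2) := by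
    constructor
    · exact ⟨xplus, hxplus, hval⟩
    · rintro y ⟨z', hz', rfl⟩
      simp only [real_inner_smul_left]
      have key : ‖z' - xplus‖ ^ 2 = ‖z' - x‖ ^ 2 + 2 * ⟪z' - x, x - xplus⟫ +
          ‖x - xplus‖ ^ 2 := by
        have h := norm_add_sq_real (z' - x) (x - xplus)
        rw [show z' - x + (x - xplus) = z' - xplus by abel] at h
        linarith
      have hcomm : ⟪x - xplus, z' - x⟫ = ⟪z' - x, x - xplus⟫ := real_inner_comm _ _
      nlinarith [sq_nonneg ‖z' - xplus‖]
  rw [hgreat.csSup_eq]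
  rw [show 2 * (2 * L) * (L * ‖x - xplus‖ ^ 2) = (2 * L * ‖x - xplus‖) ^ 2 by ring,
    Real.sqrt_sq (by positivity)]
end

section
/- Let X be a nonempty convex subset of a real inner product space H, let L > 0, ε > 0, let x̂, x⁺ ∈ X with ‖x⁺ − x̂‖ ≤ ε/(2L), and let ξ ∈ H satisfy the first-order optimality condition ⟨ξ + 2L(x⁺ − x̂), x − x⁺⟩ ≥ 0 for all x ∈ X. Then S_X(x⁺, ξ, 2L) ≤ 2L‖x⁺ − x̂‖ ≤ ε. -/
open RealInnerProductSpace

/-- if `ξ` satisfies the first-order optimality condition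
`⟨ξ + 2L(x⁺ − x̂), x − x⁺⟩ ≥ 0` for all `x ∈ X` and `‖x⁺ − x̂‖ ≤ ε/(2L)`, then
`S_X(x⁺, ξ, 2L) ≤ 2L‖x⁺ − x̂‖ ≤ ε`. -/
theorem stmt_15 {H : Type*} [NormedAddCommGroup H] [InnerProductSpace ℝ H]
    (X : Set H) (hne : X.Nonempty) (hconv : Convex ℝ X)
    (L ε : ℝ) (hL : 0 < L) (hε : 0 < ε)
    (xh xplus : H) (hxh : xh ∈ X) (hxplus : xplus ∈ X)
    (hclose : ‖xplus - xh‖ ≤ ε / (2 * L))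
    (ξ : H)
    (hopt : ∀ x ∈ X, 0 ≤ ⟪ξ + (2 * L) • (xplus - xh), x - xplus⟫) :
    Smeas X xplus ξ (2 * L) ≤ 2 * L * ‖xplus - xh‖ ∧ 2 * L * ‖xplus - xh‖ ≤ ε := by
  set a := ‖xplus - xh‖ with ha
  have ha0 : 0 ≤ a := norm_nonneg _
  have hbound : ∀ y ∈ ((fun z' : H => -⟪ξ, z' - xplus⟫ - (2 * L) / 2 * ‖z' - xplus‖ ^ 2) '' X),
      y ≤ L * a ^ 2 := by
    rintro y ⟨z', hz', rfl⟩
    have h1 := hopt z' hz'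
    rw [inner_add_left, real_inner_smul_left] at h1
    have h2 : ⟪xplus - xh, z' - xplus⟫ ≤ a * ‖z' - xplus‖ := real_inner_le_norm _ _
    have h3 : (0:ℝ) ≤ ‖z' - xplus‖ := norm_nonneg _
    nlinarith [sq_nonneg (a - ‖z' - xplus‖)]
  have hsup : sSup ((fun z' : H => -⟪ξ, z' - xplus⟫ - (2 * L) / 2 * ‖z' - xplus‖ ^ 2) '' X)
      ≤ L * a ^ 2 := Real.sSup_le hbound (by positivity)
  constructor
  · have h4 : 2 * (2 * L) * sSup ((fun z' : H => -⟪ξ, z' - xplus⟫ - (2 * L) / 2 * ‖z' - xplus‖ ^ 2) '' X)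
        ≤ (2 * L * a) ^ 2 := by nlinarith
    calc Smeas X xplus ξ (2 * L) ≤ Real.sqrt ((2 * L * a) ^ 2) := Real.sqrt_le_sqrt h4
      _ = 2 * L * a := Real.sqrt_sq (by positivity)
  · have h5 := (le_div_iff₀ (by positivity : (0:ℝ) < 2 * L)).mp hclose
    linarith
end

section
/- Let Y be a nonempty closed convex subset of a real Hilbert space H, let y, y' ∈ Y, ζ ∈ H and L > 0, and set y⁺ := Π_Y(y + ζ/L). Then ⟨y' − y, ζ⟩ ≤ L⟨y' − y, y⁺ − y⟩ + (1/(2L)) [ S_Y(y, −ζ, L)² − W_Y(y, −ζ, L)² ]. -/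
open RealInnerProductSpace

/-- for `Y` nonempty closed convex in a real Hilbert space,
`y, y' ∈ Y`, `ζ ∈ H`, `L > 0` and `y⁺ := Π_Y(y + ζ/L)` (with `proj` the metric
projection onto `Y`), one has
`⟨y' − y, ζ⟩ ≤ L⟨y' − y, y⁺ − y⟩ + (1/(2L))[S_Y(y, −ζ, L)² − W_Y(y, −ζ, L)²]`,
where `W_Y(y, −ζ, L) = L‖y − y⁺‖`. -/
theorem stmt_16 {H : Type*} [NormedAddCommGroup H] [InnerProductSpace ℝ H] [CompleteSpace H]
    (Y : Set H) (hne : Y.Nonempty) (hcl : IsClosed Y) (hconv : Convex ℝ Y)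
    (proj : H → H)
    (hproj : ∀ u : H, proj u ∈ Y ∧ ∀ w ∈ Y, ⟪u - proj u, w - proj u⟫ ≤ 0)
    (y y' : H) (hy : y ∈ Y) (hy' : y' ∈ Y)
    (ζ : H) (L : ℝ) (hL : 0 < L)
    (yplus : H) (hyplus : yplus = proj (y + (1 / L) • ζ)) :
    ⟪y' - y, ζ⟫ ≤ L * ⟪y' - y, yplus - y⟫ +
      (1 / (2 * L)) * ((Smeas Y y (-ζ) L) ^ 2 - (L * ‖y - yplus‖) ^ 2) := by
  set g : H → ℝ := fun z' => -⟪-ζ, z' - y⟫ - L / 2 * ‖z' - y‖ ^ 2 with hg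
  have hbdd : BddAbove (g '' Y) := by
    refine ⟨‖ζ‖ ^ 2 / (2 * L), ?_⟩
    rintro _ ⟨z', hz', rfl⟩
    have h1 : ⟪ζ, z' - y⟫ ≤ ‖ζ‖ * ‖z' - y‖ := real_inner_le_norm ζ (z' - y)
    have h2 : 0 ≤ (‖ζ‖ - L * ‖z' - y‖) ^ 2 := sq_nonneg _
    simp only [hg, inner_neg_left, neg_neg]
    rw [le_div_iff₀ (by positivity)]
    nlinarith
  -- yplus ∈ Y and projection inequality
  have hpj := hproj (y + (1 / L) • ζ)
  have hyp : yplus ∈ Y := hyplus ▸ hpj.1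
  have hineq := hpj.2 y' hy'
  rw [← hyplus] at hineq
  have hproj' : ⟪ζ, y' - yplus⟫ ≤ L * ⟪y' - yplus, yplus - y⟫ := by
    have : ⟪y - yplus, y' - yplus⟫ + (1 / L) * ⟪ζ, y' - yplus⟫ ≤ 0 := by
      have e : y + (1 / L) • ζ - yplus = (y - yplus) + (1 / L) • ζ := by abel
      rw [e, inner_add_left, real_inner_smul_left] at hineq
      linarith
    have h2 : ⟪y' - yplus, yplus - y⟫ = -⟪y - yplus, y' - yplus⟫ := by
      rw [real_inner_comm]
      rw [show yplus - y = -(y - yplus) by abel, inner_neg_left]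
    rw [h2]
    have := mul_le_mul_of_nonneg_left this hL.le
    field_simp at this ⊢
    linarith
  -- sSup lower bounds
  have hS0 : (0 : ℝ) ≤ sSup (g '' Y) := by
    have : g y = 0 := by simp [hg]
    have := le_csSup hbdd (Set.mem_image_of_mem g hy)
    linarith
  have hSp : g yplus ≤ sSup (g '' Y) := le_csSup hbdd (Set.mem_image_of_mem g hyp)
  have hSq : (Smeas Y y (-ζ) L) ^ 2 = 2 * L * sSup (g '' Y) := by
    rw [Smeas, Real.sq_sqrt (by positivity)]
  rw [hSq]
  have hgp : g yplus = ⟪ζ, yplus - y⟫ - L / 2 * ‖yplus - y‖ ^ 2 := by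
    simp [hg, inner_neg_left]
  have hnorm : ‖y - yplus‖ ^ 2 = ‖yplus - y‖ ^ 2 := by rw [norm_sub_rev]
  have key : ⟪y' - y, ζ⟫ = ⟪ζ, y' - yplus⟫ + ⟪ζ, yplus - y⟫ := by
    rw [real_inner_comm, ← inner_add_right]
    congr 1
    abel
  have exp1 : ⟪y' - yplus, yplus - y⟫ = ⟪y' - y, yplus - y⟫ - ‖yplus - y‖ ^ 2 := by
    rw [show y' - yplus = (y' - y) - (yplus - y) by abel, inner_sub_left,
      real_inner_self_eq_norm_sq]
  rw [exp1] at hproj'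
  rw [hgp] at hSp
  have hrw : (1 / (2 * L)) * (2 * L * sSup (g '' Y) - (L * ‖y - yplus‖) ^ 2)
      = sSup (g '' Y) - L / 2 * ‖yplus - y‖ ^ 2 := by
    rw [hnorm.symm]; field_simp
  rw [key, hrw]
  nlinarith [hproj', hSp]
end

section
/- Let Y be a nonempty closed convex subset of a real Hilbert space H, let L > 0, and let h : Y → ℝ be differentiable and concave on Y (so h(y') − h(y) ≤ ⟨∇h(y), y' − y⟩ for all y, y' ∈ Y). Define ζ^L(y) := L(Π_Y(y + ∇h(y)/L) − y). Then for all y, y' ∈ Y: h(y') − h(y) ≤ ⟨ζ^L(y), y' − y⟩ + (1/(2L)) [ S_Y(y, −∇h(y), L)² − W_Y(y, −∇h(y), L)² ]. -/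
open RealInnerProductSpace

/-- for `h` differentiable and concave on the nonempty closed convex
set `Y` in a real Hilbert space (with gradient `dh`), and
`ζ^L(y) := L(Π_Y(y + ∇h(y)/L) − y)`, one has for all `y, y' ∈ Y`:
`h(y') − h(y) ≤ ⟨ζ^L(y), y' − y⟩ + (1/(2L))[S_Y(y, −∇h(y), L)² − W_Y(y, −∇h(y), L)²]`,
where `W_Y(y, −∇h(y), L) = ‖ζ^L(y)‖` and `proj` is the metric projection onto `Y`. -/
theorem stmt_17 {H : Type*} [NormedAddCommGroup H] [InnerProductSpace ℝ H] [CompleteSpace H]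
    (Y : Set H) (hne : Y.Nonempty) (hcl : IsClosed Y) (hconv : Convex ℝ Y)
    (proj : H → H)
    (hproj : ∀ u : H, proj u ∈ Y ∧ ∀ w ∈ Y, ⟪u - proj u, w - proj u⟫ ≤ 0)
    (L : ℝ) (hL : 0 < L)
    (h : H → ℝ) (dh : H → H)
    (hconc : ∀ y ∈ Y, ∀ y' ∈ Y, h y' - h y ≤ ⟪dh y, y' - y⟫)
    (ζL : H → H) (hζL : ∀ y : H, ζL y = L • (proj (y + (1 / L) • dh y) - y)) :
    ∀ y ∈ Y, ∀ y' ∈ Y,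
      h y' - h y ≤ ⟪ζL y, y' - y⟫ +
        (1 / (2 * L)) * ((Smeas Y y (-dh y) L) ^ 2 - (L * ‖y - proj (y + (1 / L) • dh y)‖) ^ 2) := by
  intro y hy y' hy'
  have hLne : L ≠ 0 := ne_of_gt hL
  set g := dh y with hg
  set u := y + (1 / L) • g with hu
  set p := proj u with hp
  obtain ⟨hpY, hpineq⟩ := hproj u
  set f : H → ℝ := fun z' => -⟪-g, z' - y⟫ - L / 2 * ‖z' - y‖ ^ 2 with hf
  -- explicit formula for f
  have hfid : ∀ z : H, f z = L / 2 * (‖(1 / L) • g‖ ^ 2 - ‖z - y - (1 / L) • g‖ ^ 2) := by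
    intro z
    have hexp := @norm_sub_sq_real H _ _ (z - y) ((1 / L) • g)
    have hsm : ⟪z - y, (1 / L) • g⟫ = (1 / L) * ⟪z - y, g⟫ := real_inner_smul_right _ _ _
    have hcomm : ⟪z - y, g⟫ = ⟪g, z - y⟫ := real_inner_comm _ _
    simp only [hf, inner_neg_left, neg_neg]
    rw [hexp, hsm, hcomm]
    field_simp
    ring
  have hbdd : BddAbove (f '' Y) := by
    refine ⟨L / 2 * ‖(1 / L) • g‖ ^ 2, ?_⟩
    rintro _ ⟨z, hz, rfl⟩
    rw [hfid z]
    nlinarith [sq_nonneg ‖z - y - (1 / L) • g‖, hL.le]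
  have hsup_ge_p : f p ≤ sSup (f '' Y) := le_csSup hbdd ⟨p, hpY, rfl⟩
  have hfy : f y = 0 := by simp [hf]
  have hsup_nonneg : 0 ≤ sSup (f '' Y) := by
    have := le_csSup hbdd ⟨y, hy, rfl⟩
    linarith [hfy ▸ this]
  -- Smeas squared
  have hS : (Smeas Y y (-g) L) ^ 2 = 2 * L * sSup (f '' Y) := by
    rw [Smeas, Real.sq_sqrt]
    positivity
  -- scalar abbreviations
  set A := ⟪g, y' - y⟫ with hA
  set B := ⟪g, p - y⟫ with hB
  set C := ⟪p - y, y' - y⟫ with hC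
  set N := ‖p - y‖ ^ 2 with hN
  -- projection inequality expanded
  have hPI : -C + N + (1 / L) * (A - B) ≤ 0 := by
    have h0 := hpineq y' hy'
    have hup : u - p = (y - p) + (1 / L) • g := by rw [hu]; abel
    have he : ⟪u - p, y' - p⟫ = ⟪y - p, y' - p⟫ + (1 / L) * ⟪g, y' - p⟫ := by
      rw [hup, inner_add_left, real_inner_smul_left]
    have he1 : ⟪y - p, y' - p⟫ = -C + N := by
      have : (y : H) - p = -(p - y) := by abel
      rw [this, inner_neg_left]
      have : (y' : H) - p = (y' - y) - (p - y) := by abel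
      rw [this, inner_sub_right, hC]
      have : ⟪p - y, p - y⟫ = N := by rw [real_inner_self_eq_norm_sq]
      rw [this]; ring
    have he2 : ⟪g, y' - p⟫ = A - B := by
      have : (y' : H) - p = (y' - y) - (p - y) := by abel
      rw [this, inner_sub_right, hA, hB]
    rw [he, he1, he2] at h0
    linarith
  have hA_le : A ≤ B + L * C - L * N := by
    have := mul_le_mul_of_nonneg_left hPI hL.le
    have hLL : L * ((1 / L) * (A - B)) = A - B := by field_simp
    nlinarith
  -- f p value
  have hfp : f p = B - L / 2 * N := by
    simp only [hf, inner_neg_left, neg_neg, hB, hN]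
  -- ζL term
  have hzl : ⟪ζL y, y' - y⟫ = L * C := by
    rw [hζL y, real_inner_smul_left]
  have hnorm : ‖y - p‖ = ‖p - y‖ := norm_sub_rev _ _
  have hmain := hconc y hy y' hy'
  rw [hzl, hS, hnorm]
  have hsup_ge : B - L / 2 * N ≤ sSup (f '' Y) := hfp ▸ hsup_ge_p
  have hNnn : (L * ‖p - y‖) ^ 2 = L ^ 2 * N := by rw [hN]; ring
  rw [hNnn]
  have h2L : (0:ℝ) < 2 * L := by linarith
  have : ⟪g, y' - y⟫ ≤ L * C + 1 / (2 * L) * (2 * L * sSup (f '' Y) - L ^ 2 * N) := by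
    have hid : 1 / (2 * L) * (2 * L * sSup (f '' Y) - L ^ 2 * N)
        = sSup (f '' Y) - L / 2 * N := by field_simp
    rw [hid]
    calc ⟪g, y' - y⟫ = A := rfl
      _ ≤ B + L * C - L * N := hA_le
      _ ≤ L * C + (sSup (f '' Y) - L / 2 * N) := by linarith
  linarith
end
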